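/- arXiv:2505.04470 — 7 statements merged into one kernel-verified Lean document; each statement's English description precedes it below -/
import Mathlib

section
/- If an edge {x,y} of a locally finite simple graph is not contained in any cycle of length 3 or 4, then the Lin-Lu-Yau curvature satisfies κ_LLY(x,y) ≤ 1/d_x + 2/d_y − 1. -/
open SimpleGraph

attribute [local instance] Classical.propDecidable

variable {V : Type*}

/-- Normalized graph Laplacian applied to an integer-valued function. -/
noncomputable def lap (G : SimpleGraph V) [∀ v : V, Fintype (G.neighborSet v)]
    (f : V → ℤ) (v : V) : ℝ :=
  (∑ w ∈ G.neighborFinset v, ((f w : ℝ) - (f v : ℝ))) / (G.degree v : ℝ)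

/-- Lin-Lu-Yau curvature via the Laplacian (Münch–Wojciechowski) formulation:
the infimum of `Δf(x) − Δf(y)` over integer-valued functions that are
1-Lipschitz on `N[x] ∪ N[y]` and satisfy `f(y) − f(x) = 1`. -/
noncomputable def kappaLLY (G : SimpleGraph V) [∀ v : V, Fintype (G.neighborSet v)]
    (x y : V) : ℝ :=
  sInf { r : ℝ | ∃ f : V → ℤ,
    (∀ u ∈ insert x (G.neighborSet x) ∪ insert y (G.neighborSet y),
      ∀ v ∈ insert x (G.neighborSet x) ∪ insert y (G.neighborSet y),
        |f u - f v| ≤ (G.dist u v : ℤ)) ∧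
    f y - f x = 1 ∧ r = lap G f x - lap G f y }

/-- The edge `{p,q}` is contained in no triangle and no 4-cycle. -/
def noC3C4 (G : SimpleGraph V) (p q : V) : Prop :=
  (∀ z : V, ¬ (G.Adj p z ∧ G.Adj z q)) ∧
  (∀ u v : V, G.Adj p u → G.Adj u v → G.Adj v q → u = q ∨ v = p)

/-- The wheel graph on `Fin n`: hub `0` joined to the rim cycle `1, …, n-1`. -/
noncomputable def wheel (n : ℕ) : SimpleGraph (Fin n) :=
  SimpleGraph.fromRel (fun a b =>
    a.val = 0 ∨ b.val = a.val + 1 ∨ (a.val = n - 1 ∧ b.val = 1))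

/-- `u` and `v` lie in the same component of `T − x`. -/
def SameComp (T : SimpleGraph V) (x u v : V) : Prop :=
  ∃ w : T.Walk u v, x ∉ w.support

/-- The generalized Halin graph obtained from the tree `T` by joining its
leaves, listed in the cyclic order `σ`, by a cycle. -/
noncomputable def halinGraph (T : SimpleGraph V) {ℓ : ℕ} (σ : ZMod ℓ → V) : SimpleGraph V :=
  T ⊔ SimpleGraph.fromRel (fun a b => ∃ i : ZMod ℓ, a = σ i ∧ b = σ (i + 1))

/-- Distance from a vertex to a set of vertices. -/
noncomputable def distToSet (G : SimpleGraph V) (S : Set V) (z : V) : ℕ :=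
  sInf {d : ℕ | ∃ s ∈ S, d = G.dist z s}


private lemma two_le_dist {G : SimpleGraph V} (hG : G.Connected) {u v : V}
    (hne : u ≠ v) (hna : ¬ G.Adj u v) : 2 ≤ G.dist u v := by
  have h0 : G.dist u v ≠ 0 := Nat.pos_iff_ne_zero.mp (hG.pos_dist_of_ne hne)
  have h1 : G.dist u v ≠ 1 := fun hh => hna (dist_eq_one_iff_adj.mp hh)
  omega


theorem stmt1 {V : Type*} (G : SimpleGraph V)
    [∀ v : V, Fintype (G.neighborSet v)] (hG : G.Connected)
    (x y : V) (hxy : G.Adj x y) (h : noC3C4 G x y) :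
    kappaLLY G x y ≤ 1 / (G.degree x : ℝ) + 2 / (G.degree y : ℝ) - 1 := by
  classical
  obtain ⟨h3, h4⟩ := h
  have hne : x ≠ y := G.ne_of_adj hxy
  have hdx : 0 < G.degree x := by
    rw [G.degree_pos_iff_exists_adj]; exact ⟨y, hxy⟩
  have hdy : 0 < G.degree y := by
    rw [G.degree_pos_iff_exists_adj]; exact ⟨x, hxy.symm⟩
  set S : Set V := insert x (G.neighborSet x) ∪ insert y (G.neighborSet y) with hS
  -- membership facts
  have hxS : x ∈ S := Or.inl (Set.mem_insert _ _)
  have hyS : y ∈ S := Or.inr (Set.mem_insert _ _)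
  have hNx : ∀ w, G.Adj x w → w ∈ S := fun w hw => Or.inl (Set.mem_insert_of_mem _ hw)
  have hNy : ∀ w, G.Adj y w → w ∈ S := fun w hw => Or.inr (Set.mem_insert_of_mem _ hw)
  -- the test function
  set f : V → ℤ := fun v => if v = y then 1 else if G.Adj y v ∧ v ≠ x then 2 else 0 with hf
  have fx : f x = 0 := by simp [hf, hne]
  have fy : f y = 1 := by simp [hf]
  have fNx : ∀ w, G.Adj x w → w ≠ y → f w = 0 := by
    intro w hw hwy
    have : ¬ G.Adj y w := fun hyw => h3 w ⟨hw, hyw.symm⟩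
    simp [hf, hwy, this]
  have fNy : ∀ w, G.Adj y w → w ≠ x → f w = 2 := by
    intro w hw hwx
    have hwy : w ≠ y := fun e => (G.irrefl (e ▸ hw))
    simp [hf, hwy, hw, hwx]
  -- 2-valued vertices are at distance ≥ 2 from 0-valued vertices of S
  have hzero : ∀ v ∈ S, f v = 0 → v = x ∨ (G.Adj x v ∧ v ≠ y) := by
    intro v hv hv0
    rcases hv with hv | hv
    · rcases Set.mem_insert_iff.mp hv with rfl | hv
      · exact Or.inl rfl
      · by_cases hvy : v = y
        · subst hvy; rw [fy] at hv0; omega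
        · exact Or.inr ⟨hv, hvy⟩
    · rcases Set.mem_insert_iff.mp hv with rfl | hv
      · rw [fy] at hv0; omega
      · by_cases hvx : v = x
        · exact Or.inl hvx
        · rw [fNy v hv hvx] at hv0; omega
  have hfar : ∀ u, G.Adj y u → u ≠ x → ∀ v ∈ S, f v = 0 → 2 ≤ G.dist u v := by
    intro u hu hux v hv hv0
    rcases hzero v hv hv0 with rfl | ⟨hav, hvy⟩
    · exact two_le_dist hG hux (fun hav => h3 u ⟨hav.symm, hu.symm⟩)
    · have hnuv : u ≠ v := by
        rintro rfl; exact h3 u ⟨hav, hu.symm⟩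
      have hnadj : ¬ G.Adj u v := by
        intro ha
        rcases h4 v u hav ha.symm hu.symm with e | e
        · exact hvy e
        · exact hux e
      exact two_le_dist hG hnuv hnadj
  -- Lipschitz
  have hLip : ∀ u ∈ S, ∀ v ∈ S, |f u - f v| ≤ (G.dist u v : ℤ) := by
    have key : ∀ u ∈ S, ∀ v ∈ S, f u - f v ≤ (G.dist u v : ℤ) := by
      intro u hu v hv
      by_cases huv : u = v
      · subst huv; simp
      have hd1 : 1 ≤ G.dist u v := hG.pos_dist_of_ne huv
      have hd1' : (1 : ℤ) ≤ (G.dist u v : ℤ) := by exact_mod_cast hd1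
      by_cases hu2 : G.Adj y u ∧ u ≠ x
      · -- f u = 2
        have hfu : f u = 2 := fNy u hu2.1 hu2.2
        by_cases hv0 : f v = 0
        · have := hfar u hu2.1 hu2.2 v hv hv0
          have : (2 : ℤ) ≤ (G.dist u v : ℤ) := by exact_mod_cast this
          omega
        · -- f v ∈ {1, 2}
          have : f v = 1 ∨ f v = 2 := by
            by_cases hvy : v = y
            · left; rw [hvy, fy]
            · rcases hv with hv | hv
              · rcases Set.mem_insert_iff.mp hv with rfl | hv
                · rw [fx] at hv0; omega
                · rw [fNx v hv hvy] at hv0; omega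
              · rcases Set.mem_insert_iff.mp hv with rfl | hv
                · exact absurd rfl hvy
                · by_cases hvx : v = x
                  · subst hvx; rw [fx] at hv0; omega
                  · right; exact fNy v hv hvx
          omega
      · -- f u ∈ {0, 1}
        have hfu : f u = 0 ∨ f u = 1 := by
          by_cases huy : u = y
          · right; rw [huy, fy]
          · rcases hu with hu | hu
            · rcases Set.mem_insert_iff.mp hu with rfl | hu
              · left; exact fx
              · left; exact fNx u hu huy
            · rcases Set.mem_insert_iff.mp hu with rfl | hu
              · exact absurd rfl huy
              · by_cases hux : u = x
                · left; rw [hux, fx]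
                · exact absurd ⟨hu, hux⟩ hu2
        have hfv : 0 ≤ f v ∨ True := Or.inr trivial
        have hfvlb : 0 ≤ f v := by
          by_cases hvy : v = y
          · rw [hvy, fy]; omega
          · by_cases hv2 : G.Adj y v ∧ v ≠ x
            · rw [fNy v hv2.1 hv2.2]; omega
            · simp only [hf, hvy, hv2, if_false]; omega
        omega
    intro u hu v hv
    have h1 := key u hu v hv
    have h2 := key v hv u hu
    rw [G.dist_comm] at h2
    rw [abs_le]
    omega
  -- the sums
  have hyNx : y ∈ G.neighborFinset x := by rw [mem_neighborFinset]; exact hxy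
  have hxNy : x ∈ G.neighborFinset y := by rw [mem_neighborFinset]; exact hxy.symm
  have sumx : ∑ w ∈ G.neighborFinset x, ((f w : ℝ) - (f x : ℝ)) = 1 := by
    rw [Finset.sum_eq_single_of_mem y hyNx]
    · rw [fx, fy]; norm_num
    · intro w hw hwy
      rw [fx, fNx w ((mem_neighborFinset G x w).mp hw) hwy]; norm_num
  have sumy : ∑ w ∈ G.neighborFinset y, ((f w : ℝ) - (f y : ℝ)) = (G.degree y : ℝ) - 2 := by
    have : ∀ w ∈ G.neighborFinset y, ((f w : ℝ) - (f y : ℝ))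
        = (if w = x then (-2 : ℝ) else 0) + 1 := by
      intro w hw
      rw [mem_neighborFinset] at hw
      by_cases hwx : w = x
      · subst hwx; rw [fx, fy]; norm_num
      · rw [fNy w hw hwx, fy]; simp [hwx]; norm_num
    rw [Finset.sum_congr rfl this, Finset.sum_add_distrib, Finset.sum_ite_eq' _ x,
      if_pos hxNy, Finset.sum_const, nsmul_eq_mul, mul_one, ← G.card_neighborFinset_eq_degree]
    ring
  -- the value
  have hval : lap G f x - lap G f y = 1 / (G.degree x : ℝ) + 2 / (G.degree y : ℝ) - 1 := by
    rw [lap, lap, sumx, sumy]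
    have hx0 : (G.degree x : ℝ) ≠ 0 := by positivity
    have hy0 : (G.degree y : ℝ) ≠ 0 := by positivity
    field_simp
    ring
  -- membership
  have hmem : (1 / (G.degree x : ℝ) + 2 / (G.degree y : ℝ) - 1) ∈
      { r : ℝ | ∃ f : V → ℤ,
        (∀ u ∈ insert x (G.neighborSet x) ∪ insert y (G.neighborSet y),
          ∀ v ∈ insert x (G.neighborSet x) ∪ insert y (G.neighborSet y),
            |f u - f v| ≤ (G.dist u v : ℤ)) ∧
        f y - f x = 1 ∧ r = lap G f x - lap G f y } := by
    exact ⟨f, hLip, by rw [fx, fy]; norm_num, hval.symm⟩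
  -- bounded below
  have hbdd : BddBelow { r : ℝ | ∃ f : V → ℤ,
        (∀ u ∈ insert x (G.neighborSet x) ∪ insert y (G.neighborSet y),
          ∀ v ∈ insert x (G.neighborSet x) ∪ insert y (G.neighborSet y),
            |f u - f v| ≤ (G.dist u v : ℤ)) ∧
        f y - f x = 1 ∧ r = lap G f x - lap G f y } := by
    refine ⟨-2, ?_⟩
    rintro r ⟨g, hgLip, hgxy, rfl⟩
    have htermx : ∀ w ∈ G.neighborFinset x, (-1 : ℝ) ≤ (g w : ℝ) - (g x : ℝ) := by
      intro w hw
      rw [mem_neighborFinset] at hw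
      have hd : G.dist w x = 1 := dist_eq_one_iff_adj.mpr hw.symm
      have hl := hgLip w (hNx w hw) x hxS
      rw [hd] at hl
      have h1 := (abs_le.mp hl).1
      have h2 : (-1 : ℤ) ≤ g w - g x := by exact_mod_cast h1
      exact_mod_cast h2
    have htermy : ∀ w ∈ G.neighborFinset y, (g w : ℝ) - (g y : ℝ) ≤ 1 := by
      intro w hw
      rw [mem_neighborFinset] at hw
      have hd : G.dist w y = 1 := dist_eq_one_iff_adj.mpr hw.symm
      have hl := hgLip w (hNy w hw) y hyS
      rw [hd] at hl
      have h1 := (abs_le.mp hl).2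
      have h2 : g w - g y ≤ (1 : ℤ) := by exact_mod_cast h1
      exact_mod_cast h2
    have hsumx : (-1 : ℝ) * (G.degree x : ℝ) ≤ ∑ w ∈ G.neighborFinset x, ((g w : ℝ) - (g x : ℝ)) := by
      calc (-1 : ℝ) * (G.degree x : ℝ) = ∑ _w ∈ G.neighborFinset x, (-1 : ℝ) := by
            rw [Finset.sum_const, nsmul_eq_mul, ← G.card_neighborFinset_eq_degree]; ring
        _ ≤ _ := Finset.sum_le_sum htermx
    have hsumy : ∑ w ∈ G.neighborFinset y, ((g w : ℝ) - (g y : ℝ)) ≤ 1 * (G.degree y : ℝ) := by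
      calc ∑ w ∈ G.neighborFinset y, ((g w : ℝ) - (g y : ℝ))
          ≤ ∑ _w ∈ G.neighborFinset y, (1 : ℝ) := Finset.sum_le_sum htermy
        _ = 1 * (G.degree y : ℝ) := by
            rw [Finset.sum_const, nsmul_eq_mul, ← G.card_neighborFinset_eq_degree]; ring
    have hlapx : (-1 : ℝ) ≤ lap G g x := by
      rw [lap, le_div_iff₀ (by positivity : (0 : ℝ) < (G.degree x : ℝ))]
      linarith
    have hlapy : lap G g y ≤ 1 := by
      rw [lap, div_le_iff₀ (by positivity : (0 : ℝ) < (G.degree y : ℝ))]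
      linarith
    linarith
  exact csInf_le hbdd hmem
end

section
/- Let G be a locally finite simple graph and {x,y} an edge not contained in any triangle or 4-cycle, with d_x ≥ 3 and d_y ≥ 3. Then κ_LLY(x,y) ≤ 0. -/
/-!
Take the test function `f` with `f x = 0`, `f y = 1`, `f = -1` on the other neighbours of `x`,
`f = 1` on the other neighbours of `y` and `f = 0` elsewhere. Since `xy` lies in no triangle or
4-cycle, no vertex with value `-1` is adjacent to one with value `1`, so `f` is 1-Lipschitz. Then
`Δf(x) - Δf(y) = (2 - d_x)/d_x + 1/d_y = 2/d_x + 1/d_y - 1 ≤ 0` for `d_x, d_y ≥ 3`.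
-/

open SimpleGraph

attribute [local instance] Classical.propDecidable

variable {V : Type*}

namespace SimpleGraph

theorem abs_sub_le_dist_of_abs_le_one {G : SimpleGraph V} {g : V → ℤ} {u v : V}
    (hu : |g u| ≤ 1) (hv : |g v| ≤ 1) (huv : G.Reachable u v)
    (hadj : G.Adj u v → |g u - g v| ≤ 1) : |g u - g v| ≤ G.dist u v := by
  rcases eq_or_ne u v with rfl | hne
  · simp
  by_cases h : G.Adj u v
  · simpa [dist_eq_one_iff_adj.2 h] using hadj h
  have hdist : 2 ≤ G.dist u v := by
    have h1 := huv.pos_dist_of_ne hne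
    have h2 : G.dist u v ≠ 1 := fun e => h (dist_eq_one_iff_adj.1 e)
    omega
  have hdiff : |g u - g v| ≤ 2 := by
    rw [abs_le] at *
    omega
  exact hdiff.trans (by exact_mod_cast hdist)

section Laplacian

variable (G : SimpleGraph V) [∀ v : V, Fintype (G.neighborSet v)]

theorem abs_lap_le_one {f : V → ℤ} {v : V} (hf : ∀ w, G.Adj v w → |f w - f v| ≤ 1) :
    |lap G f v| ≤ 1 := by
  have hsum : |∑ w ∈ G.neighborFinset v, ((f w : ℝ) - f v)| ≤ G.degree v :=
    calc _ ≤ ∑ w ∈ G.neighborFinset v, |(f w : ℝ) - f v| := Finset.abs_sum_le_sum_abs _ _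
      _ ≤ ∑ _w ∈ G.neighborFinset v, (1 : ℝ) := Finset.sum_le_sum fun w hw => by
          exact_mod_cast hf w ((mem_neighborFinset G v w).1 hw)
      _ = G.degree v := by simp
  rw [lap, abs_div, Nat.abs_cast]
  exact div_le_one_of_le₀ hsum (Nat.cast_nonneg _)

theorem lap_eq_of_eq_const_off {f : V → ℤ} {v y : V} (hy : G.Adj v y) {c : ℝ}
    (hc : ∀ w, G.Adj v w → w ≠ y → (f w : ℝ) - f v = c) :
    lap G f v = ((f y : ℝ) - f v + (G.degree v - 1) * c) / G.degree v := by
  have hy' : y ∈ G.neighborFinset v := (mem_neighborFinset G v y).2 hy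
  have hoff : ∀ w ∈ (G.neighborFinset v).erase y, (f w : ℝ) - f v = c := fun w hw => by
    rw [Finset.mem_erase, mem_neighborFinset] at hw
    exact hc w hw.2 hw.1
  rw [lap, ← Finset.add_sum_erase _ _ hy', Finset.sum_congr rfl hoff, Finset.sum_const,
    Finset.card_erase_of_mem hy', card_neighborFinset_eq_degree, nsmul_eq_mul,
    Nat.cast_pred (G.degree_pos_iff_exists_adj v |>.2 ⟨y, hy⟩)]

theorem kappaLLY_le {x y : V} {f : V → ℤ}
    (hlip : ∀ u ∈ insert x (G.neighborSet x) ∪ insert y (G.neighborSet y),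
      ∀ v ∈ insert x (G.neighborSet x) ∪ insert y (G.neighborSet y),
        |f u - f v| ≤ (G.dist u v : ℤ))
    (hone : f y - f x = 1) : kappaLLY G x y ≤ lap G f x - lap G f y := by
  -- `|Δg| ≤ 1` at `x` and `y` bounds the admissible values below, so `sInf` is not a junk value.
  refine csInf_le ⟨-2, ?_⟩ ⟨f, hlip, hone, rfl⟩
  rintro r ⟨g, hg, -, rfl⟩
  have hx := abs_lap_le_one G (f := g) (v := x) fun w hw => by
    simpa [dist_eq_one_iff_adj.2 hw.symm] using hg w (by simp [hw]) x (by simp)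
  have hy := abs_lap_le_one G (f := g) (v := y) fun w hw => by
    simpa [dist_eq_one_iff_adj.2 hw.symm] using hg w (by simp [hw]) y (by simp)
  linarith [(abs_le.1 hx).1, (abs_le.1 hy).2]

end Laplacian

noncomputable def edgeTestFunction (G : SimpleGraph V) (x y v : V) : ℤ :=
  if v = x then 0 else if v = y then 1 else if G.Adj x v then -1 else if G.Adj y v then 1 else 0

section EdgeTestFunction

variable {G : SimpleGraph V} {x y : V}

theorem edgeTestFunction_left : edgeTestFunction G x y x = 0 := by
  simp [edgeTestFunction]

theorem edgeTestFunction_right (hxy : x ≠ y) : edgeTestFunction G x y y = 1 := by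
  simp [edgeTestFunction, hxy.symm]

theorem edgeTestFunction_of_adj_left {w : V} (hw : G.Adj x w) (hwy : w ≠ y) :
    edgeTestFunction G x y w = -1 := by
  simp [edgeTestFunction, hw.ne.symm, hwy, hw]

theorem edgeTestFunction_of_adj_right (h : noC3C4 G x y) {w : V} (hw : G.Adj y w) (hwx : w ≠ x) :
    edgeTestFunction G x y w = 1 := by
  have hxw : ¬ G.Adj x w := fun hxw => h.1 w ⟨hxw, hw.symm⟩
  simp [edgeTestFunction, hwx, hw.ne.symm, hxw, hw]

theorem abs_edgeTestFunction_le_one (v : V) : |edgeTestFunction G x y v| ≤ 1 := by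
  unfold edgeTestFunction
  split_ifs <;> simp

theorem edgeTestFunction_eq_neg_one {u : V} (hu : edgeTestFunction G x y u = -1) :
    u ≠ y ∧ G.Adj x u := by
  unfold edgeTestFunction at hu
  split_ifs at hu
  simp_all

theorem edgeTestFunction_eq_one {u : V} (hu : edgeTestFunction G x y u = 1) :
    u = y ∨ (u ≠ x ∧ G.Adj y u) := by
  unfold edgeTestFunction at hu
  split_ifs at hu <;> simp_all

/-- Such an edge would close a triangle or a 4-cycle through `xy`. -/
theorem not_adj_of_edgeTestFunction (h : noC3C4 G x y) {u v : V}
    (hu : edgeTestFunction G x y u = -1) (hv : edgeTestFunction G x y v = 1) : ¬ G.Adj u v := by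
  intro huv
  obtain ⟨huy, hxu⟩ := edgeTestFunction_eq_neg_one hu
  rcases edgeTestFunction_eq_one hv with rfl | ⟨hvx, hyv⟩
  · exact h.1 u ⟨hxu, huv⟩
  · exact (h.2 u v hxu huv hyv.symm).elim huy hvx

theorem edgeTestFunction_lipschitz (hxy : G.Adj x y) (h : noC3C4 G x y) :
    ∀ u ∈ insert x (G.neighborSet x) ∪ insert y (G.neighborSet y),
      ∀ v ∈ insert x (G.neighborSet x) ∪ insert y (G.neighborSet y),
        |edgeTestFunction G x y u - edgeTestFunction G x y v| ≤ (G.dist u v : ℤ) := by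
  have hreach : ∀ u ∈ insert x (G.neighborSet x) ∪ insert y (G.neighborSet y),
      G.Reachable x u := by
    rintro u ((rfl | hu) | rfl | hu)
    · rfl
    · exact Adj.reachable hu
    · exact hxy.reachable
    · exact hxy.reachable.trans (Adj.reachable hu)
  intro u hu v hv
  have hu' := abs_edgeTestFunction_le_one (G := G) (x := x) (y := y) u
  have hv' := abs_edgeTestFunction_le_one (G := G) (x := x) (y := y) v
  refine abs_sub_le_dist_of_abs_le_one hu' hv' ((hreach u hu).symm.trans (hreach v hv))
    fun huv => ?_
  have hneg : ¬ (edgeTestFunction G x y u = -1 ∧ edgeTestFunction G x y v = 1) :=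
    fun ⟨h₁, h₂⟩ => not_adj_of_edgeTestFunction h h₁ h₂ huv
  have hpos : ¬ (edgeTestFunction G x y v = -1 ∧ edgeTestFunction G x y u = 1) :=
    fun ⟨h₁, h₂⟩ => not_adj_of_edgeTestFunction h h₁ h₂ huv.symm
  rw [abs_le] at *
  omega

end EdgeTestFunction

end SimpleGraph

theorem stmt2 {V : Type*} (G : SimpleGraph V)
    [∀ v : V, Fintype (G.neighborSet v)]
    (x y : V) (hxy : G.Adj x y) (h : noC3C4 G x y)
    (hdx : 3 ≤ G.degree x) (hdy : 3 ≤ G.degree y) :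
    kappaLLY G x y ≤ 0 := by
  have hx3 : (3 : ℝ) ≤ G.degree x := by exact_mod_cast hdx
  have hy3 : (3 : ℝ) ≤ G.degree y := by exact_mod_cast hdy
  set f := edgeTestFunction G x y
  have hfx : f x = 0 := edgeTestFunction_left
  have hfy : f y = 1 := edgeTestFunction_right hxy.ne
  calc kappaLLY G x y
      ≤ lap G f x - lap G f y := kappaLLY_le G (edgeTestFunction_lipschitz hxy h) (by omega)
    _ = 2 / G.degree x + 1 / G.degree y - 1 := by
      rw [lap_eq_of_eq_const_off G hxy (c := -1) fun w hw hwy => by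
          simp [f, edgeTestFunction_of_adj_left hw hwy, hfx],
        lap_eq_of_eq_const_off G hxy.symm (c := 0) fun w hw hwx => by
          simp [f, edgeTestFunction_of_adj_right h hw hwx, hfy], hfx, hfy]
      field_simp
      ring
    _ ≤ 2 / 3 + 1 / 3 - 1 := by gcongr
    _ = 0 := by norm_num
end

section
/- Let G be a wheel graph W_n with hub x and rim cycle of length n−1 ≥ 12. Then for any rim vertex y, κ_LLY(x,y) ≤ 8/(n−1) − 2/3 ≤ 0. -/
noncomputable def hwf {m : ℕ} (j : ZMod m) : ℤ :=
  if j = 0 ∨ j = 1 ∨ j = -1 then 1 else if j = 2 ∨ j = -2 then 0 else -1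

lemma hwf_bounds {m : ℕ} (j : ZMod m) : -1 ≤ hwf j ∧ hwf j ≤ 1 := by
  unfold hwf; split_ifs <;> norm_num

lemma hwf_lip {m : ℕ} (j : ZMod m) : |hwf (j + 1) - hwf j| ≤ 1 := by
  have h1 : ∀ k : ZMod m, (k = 0 ∨ k = 1 ∨ k = -1 ∨ k = 2 ∨ k = -2) → 0 ≤ hwf k := by
    intro k hk; unfold hwf; split_ifs with c1 c2 <;> [norm_num; norm_num; tauto]
  have h2 := hwf_bounds (m := m)
  by_cases hc : j = 0 ∨ j = 1 ∨ j = -1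
  · have hj : hwf j = 1 := by unfold hwf; rw [if_pos hc]
    have h0 : 0 ≤ hwf (j + 1) := by
      apply h1
      rcases hc with h | h | h
      · right; left; rw [h]; ring
      · right; right; right; left; rw [h]; ring
      · left; rw [h]; ring
    rw [hj, abs_le]; exact ⟨by linarith, by linarith [(h2 (j+1)).2]⟩
  · by_cases hd : j = 2 ∨ j = -2
    · have hj : hwf j = 0 := by unfold hwf; rw [if_neg hc, if_pos hd]
      rw [hj, sub_zero, abs_le]; exact ⟨(h2 _).1, (h2 _).2⟩
    · have hj : hwf j = -1 := by unfold hwf; rw [if_neg hc, if_neg hd]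
      have h0 : hwf (j + 1) ≤ 0 := by
        unfold hwf
        have c1 : ¬(j + 1 = 0 ∨ j + 1 = 1 ∨ j + 1 = -1) := by
          rintro (h | h | h)
          · exact hc (Or.inr (Or.inr (by linear_combination h)))
          · exact hc (Or.inl (by linear_combination h))
          · exact hd (Or.inr (by linear_combination h))
        rw [if_neg c1]; split_ifs <;> norm_num
      rw [hj, abs_le]; exact ⟨by linarith [(h2 (j+1)).1], by linarith⟩

lemma zmod_ne_zero {m : ℕ} (hm : 12 ≤ m) {k : ℕ} (h0 : 0 < k) (hk : k < m) :
    (k : ZMod m) ≠ 0 := by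
  rw [Ne, ZMod.natCast_eq_zero_iff]
  intro hdvd
  exact absurd (Nat.le_of_dvd h0 hdvd) (by omega)

lemma hwf_sum {m : ℕ} [NeZero m] (hm : 12 ≤ m) :
    ∑ j : ZMod m, hwf j = 8 - (m : ℤ) := by
  have n1 : (1 : ZMod m) ≠ 0 := by
    have := zmod_ne_zero hm (k := 1) one_pos (by omega); simpa using this
  have n2 : (2 : ZMod m) ≠ 0 := by
    have := zmod_ne_zero hm (k := 2) (by omega) (by omega); simpa using this
  have n3 : (3 : ZMod m) ≠ 0 := by
    have := zmod_ne_zero hm (k := 3) (by omega) (by omega); simpa using this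
  have n4 : (4 : ZMod m) ≠ 0 := by
    have := zmod_ne_zero hm (k := 4) (by omega) (by omega); simpa using this
  have e01 : (0 : ZMod m) ≠ 1 := fun h => n1 (by linear_combination -h)
  have e0m1 : (0 : ZMod m) ≠ -1 := fun h => n1 (by linear_combination h)
  have e02 : (0 : ZMod m) ≠ 2 := fun h => n2 (by linear_combination -h)
  have e0m2 : (0 : ZMod m) ≠ -2 := fun h => n2 (by linear_combination h)
  have e1m1 : (1 : ZMod m) ≠ -1 := fun h => n2 (by linear_combination h)
  have e12 : (1 : ZMod m) ≠ 2 := fun h => n1 (by linear_combination -h)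
  have e1m2 : (1 : ZMod m) ≠ -2 := fun h => n3 (by linear_combination h)
  have em12 : (-1 : ZMod m) ≠ 2 := fun h => n3 (by linear_combination -h)
  have em1m2 : (-1 : ZMod m) ≠ -2 := fun h => n1 (by linear_combination h)
  have e2m2 : (2 : ZMod m) ≠ -2 := fun h => n4 (by linear_combination h)
  have key : ∀ j : ZMod m, hwf j =
      (if j = 0 then (2 : ℤ) else 0) + (if j = 1 then 2 else 0) + (if j = -1 then 2 else 0)
      + (if j = 2 then 1 else 0) + (if j = -2 then 1 else 0) - 1 := by
    intro j
    by_cases h0 : j = 0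
    · simp [hwf, h0, e01, e0m1, e02, e0m2]
    · by_cases h1 : j = 1
      · simp [hwf, h1, e01.symm, e1m1, e12, e1m2]
      · by_cases hm1 : j = -1
        · simp [hwf, hm1, e0m1.symm, e1m1.symm, em12, em1m2]
        · by_cases h2 : j = 2
          · simp [hwf, h2, e02.symm, e12.symm, em12.symm, e2m2]
          · by_cases hm2 : j = -2
            · simp [hwf, hm2, e0m2.symm, e1m2.symm, em1m2.symm, e2m2.symm]
            · simp [hwf, h0, h1, hm1, h2, hm2]
  rw [Finset.sum_congr rfl (fun j _ => key j)]
  simp [Finset.sum_add_distrib, Finset.sum_sub_distrib, Finset.sum_ite_eq',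
    Finset.card_univ, ZMod.card]


open SimpleGraph

attribute [local instance] Classical.propDecidable


variable {V : Type*}

section Helpers

variable {m : ℕ}

/-- The `i`-th rim vertex. -/
def vtx (m : ℕ) [NeZero m] (i : ZMod m) : Fin (m + 1) :=
  ⟨i.val + 1, Nat.succ_lt_succ i.val_lt⟩

/-- The rim index of a vertex. -/
def idx (m : ℕ) (z : Fin (m + 1)) : ZMod m := ((z.val - 1 : ℕ) : ZMod m)

lemma idx_vtx (m : ℕ) [NeZero m] (i : ZMod m) : idx m (vtx m i) = i := by
  simp [idx, vtx, ZMod.natCast_zmod_val]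

lemma vtx_idx (m : ℕ) [NeZero m] (z : Fin (m + 1)) (hz : z.val ≠ 0) :
    vtx m (idx m z) = z := by
  have hlt : z.val - 1 < m := by have := z.isLt; omega
  have : (idx m z).val = z.val - 1 := ZMod.val_cast_of_lt hlt
  apply Fin.ext
  simp only [vtx, this]
  omega

lemma vtx_val_ne (m : ℕ) [NeZero m] (i : ZMod m) : (vtx m i).val ≠ 0 := by
  simp [vtx]

lemma vtx_inj (m : ℕ) [NeZero m] {i j : ZMod m} (h : vtx m i = vtx m j) : i = j := by
  apply ZMod.val_injective
  have := congrArg Fin.val h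
  simpa [vtx] using this

lemma adj_hub_iff (m : ℕ) (hub z : Fin (m + 1)) (h0 : hub.val = 0) :
    (wheel (m + 1)).Adj hub z ↔ z ≠ hub := by
  constructor
  · exact fun h => h.ne'
  · intro hz
    rw [wheel, SimpleGraph.fromRel_adj]
    exact ⟨fun h => hz h.symm, Or.inl (Or.inl h0)⟩

lemma rim_adj_iff (m : ℕ) [NeZero m] (hm : 12 ≤ m) (a b : Fin (m + 1))
    (ha : a.val ≠ 0) (hb : b.val ≠ 0) :
    (wheel (m + 1)).Adj a b ↔ (idx m b = idx m a + 1 ∨ idx m a = idx m b + 1) := by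
  have key : ∀ u v : Fin (m + 1), u.val ≠ 0 → v.val ≠ 0 →
      idx m v = idx m u + 1 → (v.val = u.val + 1 ∨ (u.val = m ∧ v.val = 1)) ∧ u ≠ v := by
    intro u v hu hv huv
    have h1 : idx m u + 1 = ((u.val - 1 + 1 : ℕ) : ZMod m) := by push_cast [idx]; ring
    have h2 : u.val - 1 + 1 = u.val := by omega
    rw [h1, h2] at huv
    have hlt : v.val - 1 < m := by have := v.isLt; omega
    have hval : v.val - 1 = u.val % m := by
      have := congrArg ZMod.val huv
      simp only [idx] at this
      rwa [ZMod.val_cast_of_lt hlt, ZMod.val_natCast] at this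
    have hule : u.val ≤ m := by have := u.isLt; omega
    rcases eq_or_lt_of_le hule with heq | hlt'
    · have : v.val = 1 := by rw [heq, Nat.mod_self] at hval; omega
      exact ⟨Or.inr ⟨heq, this⟩, by intro h; rw [h] at heq; omega⟩
    · have : v.val = u.val + 1 := by rw [Nat.mod_eq_of_lt hlt'] at hval; omega
      exact ⟨Or.inl this, by intro h; rw [h] at this; omega⟩
  constructor
  · intro hadj
    rw [wheel, SimpleGraph.fromRel_adj] at hadj
    obtain ⟨hne, hrel⟩ := hadj
    have hm1 : m + 1 - 1 = m := by omega
    rcases hrel with (h | h | h) | (h | h | h)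
    · exact absurd h ha
    · left
      have h1 : idx m a + 1 = ((a.val - 1 + 1 : ℕ) : ZMod m) := by push_cast [idx]; ring
      rw [h1, (by omega : a.val - 1 + 1 = a.val), idx, h, Nat.add_sub_cancel]
    · left
      rw [hm1] at h
      have h1 : idx m a + 1 = ((a.val - 1 + 1 : ℕ) : ZMod m) := by push_cast [idx]; ring
      rw [h1, (by omega : a.val - 1 + 1 = a.val), h.1, idx, h.2, ZMod.natCast_self]
      norm_num
    · exact absurd h hb
    · right
      have h1 : idx m b + 1 = ((b.val - 1 + 1 : ℕ) : ZMod m) := by push_cast [idx]; ring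
      rw [h1, (by omega : b.val - 1 + 1 = b.val), idx, h, Nat.add_sub_cancel]
    · right
      rw [hm1] at h
      have h1 : idx m b + 1 = ((b.val - 1 + 1 : ℕ) : ZMod m) := by push_cast [idx]; ring
      rw [h1, (by omega : b.val - 1 + 1 = b.val), h.1, idx, h.2, ZMod.natCast_self]
      norm_num
  · intro hidx
    rw [wheel, SimpleGraph.fromRel_adj]
    rcases hidx with h | h
    · obtain ⟨hc, hne⟩ := key a b ha hb h
      refine ⟨hne, Or.inl ?_⟩
      rcases hc with h' | h'
      · exact Or.inr (Or.inl h')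
      · exact Or.inr (Or.inr ⟨by omega, h'.2⟩)
    · obtain ⟨hc, hne⟩ := key b a hb ha h
      refine ⟨hne.symm, Or.inr ?_⟩
      rcases hc with h' | h'
      · exact Or.inr (Or.inl h')
      · exact Or.inr (Or.inr ⟨by omega, h'.2⟩)

/-- The witness function. -/
noncomputable def fw (m : ℕ) (i₀ : ZMod m) (z : Fin (m + 1)) : ℤ :=
  if z.val = 0 then 0 else hwf (idx m z - i₀)

lemma fw_bounds (m : ℕ) (i₀ : ZMod m) (z : Fin (m + 1)) :
    -1 ≤ fw m i₀ z ∧ fw m i₀ z ≤ 1 := by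
  unfold fw
  split_ifs
  · norm_num
  · exact hwf_bounds _

lemma fw_vtx (m : ℕ) [NeZero m] (i₀ i : ZMod m) :
    fw m i₀ (vtx m i) = hwf (i - i₀) := by
  rw [fw, if_neg (vtx_val_ne m i), idx_vtx]

lemma fw_lip (m : ℕ) [NeZero m] (hm : 12 ≤ m) (i₀ : ZMod m) (u v : Fin (m + 1)) :
    |fw m i₀ u - fw m i₀ v| ≤ ((wheel (m + 1)).dist u v : ℤ) := by
  have hb := fw_bounds m i₀
  rcases eq_or_ne u v with rfl | hne
  · simp
  by_cases hadj : (wheel (m + 1)).Adj u v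
  · rw [SimpleGraph.dist_eq_one_iff_adj.mpr hadj]
    by_cases hu : u.val = 0
    · rw [fw, if_pos hu]
      rw [abs_le]
      exact ⟨by push_cast; linarith [(hb v).2], by push_cast; linarith [(hb v).1]⟩
    · by_cases hv : v.val = 0
      · have hv0 : fw m i₀ v = 0 := by rw [fw, if_pos hv]
        rw [hv0, sub_zero, abs_le]
        exact ⟨by push_cast; linarith [(hb u).1], by push_cast; linarith [(hb u).2]⟩
      · rcases (rim_adj_iff m hm u v hu hv).mp hadj with h | h
        · have h1 : fw m i₀ v = hwf ((idx m u - i₀) + 1) := by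
            rw [fw, if_neg hv]; congr 1; rw [h]; ring
          have h2 : fw m i₀ u = hwf (idx m u - i₀) := by rw [fw, if_neg hu]
          rw [h1, h2, abs_sub_comm]
          exact_mod_cast hwf_lip (idx m u - i₀)
        · have h1 : fw m i₀ u = hwf ((idx m v - i₀) + 1) := by
            rw [fw, if_neg hu]; congr 1; rw [h]; ring
          have h2 : fw m i₀ v = hwf (idx m v - i₀) := by rw [fw, if_neg hv]
          rw [h1, h2]
          exact_mod_cast hwf_lip (idx m v - i₀)
  · have hu : u.val ≠ 0 := by
      intro h0
      exact hadj ((adj_hub_iff m u v h0).mpr hne.symm)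
    have hv : v.val ≠ 0 := by
      intro h0
      exact hadj (((adj_hub_iff m v u h0).mpr hne).symm)
    have hub0 : ((⟨0, by omega⟩ : Fin (m + 1)) : Fin (m+1)).val = 0 := rfl
    have a1 : (wheel (m + 1)).Adj ⟨0, by omega⟩ u := (adj_hub_iff m _ u hub0).mpr
      (by intro h; apply hu; rw [h])
    have a2 : (wheel (m + 1)).Adj ⟨0, by omega⟩ v := (adj_hub_iff m _ v hub0).mpr
      (by intro h; apply hv; rw [h])
    have hreach : (wheel (m + 1)).Reachable u v := a1.symm.reachable.trans a2.reachable
    have hpos : 0 < (wheel (m + 1)).dist u v := hreach.pos_dist_of_ne hne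
    have hne1 : (wheel (m + 1)).dist u v ≠ 1 := by
      intro h1
      exact hadj (SimpleGraph.dist_eq_one_iff_adj.mp h1)
    have h2 : 2 ≤ (wheel (m + 1)).dist u v := by omega
    have habs : |fw m i₀ u - fw m i₀ v| ≤ 2 := by
      rw [abs_le]
      exact ⟨by linarith [(hb u).1, (hb v).2], by linarith [(hb u).2, (hb v).1]⟩
    calc |fw m i₀ u - fw m i₀ v| ≤ 2 := habs
      _ ≤ ((wheel (m + 1)).dist u v : ℤ) := by exact_mod_cast h2

end Helpers

section Nbhd

variable {m : ℕ}

lemma nbhd_hub (m : ℕ) [∀ v : Fin (m + 1), Fintype ((wheel (m + 1)).neighborSet v)]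
    (hub : Fin (m + 1)) (h0 : hub.val = 0) :
    (wheel (m + 1)).neighborFinset hub = Finset.univ.erase hub := by
  ext z
  simp [SimpleGraph.mem_neighborFinset, adj_hub_iff m hub z h0]

lemma deg_hub (m : ℕ) [∀ v : Fin (m + 1), Fintype ((wheel (m + 1)).neighborSet v)]
    (hub : Fin (m + 1)) (h0 : hub.val = 0) :
    (wheel (m + 1)).degree hub = m := by
  rw [← SimpleGraph.card_neighborFinset_eq_degree, nbhd_hub m hub h0]
  simp

lemma nbhd_y (m : ℕ) [NeZero m] [∀ v : Fin (m + 1), Fintype ((wheel (m + 1)).neighborSet v)]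
    (hm : 12 ≤ m) (hub y : Fin (m + 1)) (h0 : hub.val = 0) (hy : y.val ≠ 0) :
    (wheel (m + 1)).neighborFinset y =
      {hub, vtx m (idx m y + 1), vtx m (idx m y - 1)} := by
  ext z
  rw [SimpleGraph.mem_neighborFinset]
  simp only [Finset.mem_insert, Finset.mem_singleton]
  constructor
  · intro hadj
    by_cases hz : z.val = 0
    · left; exact Fin.val_injective (by rw [hz, h0])
    · rcases (rim_adj_iff m hm y z hy hz).mp hadj with hcase | hcase
      · right; left; rw [← hcase]; exact (vtx_idx m z hz).symm
      · right; right
        have : idx m y - 1 = idx m z := by linear_combination hcase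
        rw [this]; exact (vtx_idx m z hz).symm
  · rintro (rfl | rfl | rfl)
    · exact ((adj_hub_iff m z y h0).mpr (by intro hh; apply hy; rw [hh, h0])).symm
    · rw [rim_adj_iff m hm y _ hy (vtx_val_ne m _)]
      left; rw [idx_vtx]
    · rw [rim_adj_iff m hm y _ hy (vtx_val_ne m _)]
      right; rw [idx_vtx]; ring

lemma hub_ne_vtx (m : ℕ) [NeZero m] (hub : Fin (m + 1)) (h0 : hub.val = 0) (i : ZMod m) :
    hub ≠ vtx m i := by
  intro hh
  exact vtx_val_ne m i (by rw [← hh, h0])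

lemma vtx_add_ne_sub (m : ℕ) [NeZero m] (hm : 12 ≤ m) (i : ZMod m) :
    vtx m (i + 1) ≠ vtx m (i - 1) := by
  intro hh
  have := vtx_inj m hh
  have h2 : (2 : ZMod m) = 0 := by linear_combination this
  have : ((2 : ℕ) : ZMod m) ≠ 0 := zmod_ne_zero hm (by omega) (by omega)
  simp at this
  exact this h2

lemma deg_y (m : ℕ) [NeZero m] [∀ v : Fin (m + 1), Fintype ((wheel (m + 1)).neighborSet v)]
    (hm : 12 ≤ m) (hub y : Fin (m + 1)) (h0 : hub.val = 0) (hy : y.val ≠ 0) :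
    (wheel (m + 1)).degree y = 3 := by
  rw [← SimpleGraph.card_neighborFinset_eq_degree, nbhd_y m hm hub y h0 hy]
  rw [Finset.card_insert_of_notMem, Finset.card_insert_of_notMem, Finset.card_singleton]
  · simp [vtx_add_ne_sub m hm (idx m y)]
  · simp [hub_ne_vtx m hub h0]

lemma lap_pm {W : Type*} [Fintype W] {G : SimpleGraph W}
    [∀ v : W, Fintype (G.neighborSet v)] (g : W → ℤ) (v : W) (hd : 0 < G.degree v)
    (hL : ∀ w ∈ G.neighborFinset v, |g w - g v| ≤ 1) :
    -1 ≤ lap G g v ∧ lap G g v ≤ 1 := by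
  have hd' : (0 : ℝ) < (G.degree v : ℝ) := by exact_mod_cast hd
  have hcard : ((G.neighborFinset v).card : ℝ) = (G.degree v : ℝ) := by
    rw [SimpleGraph.card_neighborFinset_eq_degree]
  have hup : ∑ w ∈ G.neighborFinset v, ((g w : ℝ) - (g v : ℝ)) ≤ (G.degree v : ℝ) := by
    calc ∑ w ∈ G.neighborFinset v, ((g w : ℝ) - (g v : ℝ))
        ≤ ∑ _w ∈ G.neighborFinset v, (1 : ℝ) := by
          apply Finset.sum_le_sum
          intro w hw
          have := (abs_le.mp (hL w hw)).2
          exact_mod_cast this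
      _ = (G.degree v : ℝ) := by rw [Finset.sum_const, nsmul_eq_mul, mul_one, hcard]
  have hlo : -(G.degree v : ℝ) ≤ ∑ w ∈ G.neighborFinset v, ((g w : ℝ) - (g v : ℝ)) := by
    calc -(G.degree v : ℝ) = ∑ _w ∈ G.neighborFinset v, (-1 : ℝ) := by
          rw [Finset.sum_const, nsmul_eq_mul, mul_neg_one, hcard]
      _ ≤ ∑ w ∈ G.neighborFinset v, ((g w : ℝ) - (g v : ℝ)) := by
          apply Finset.sum_le_sum
          intro w hw
          have := (abs_le.mp (hL w hw)).1
          exact_mod_cast this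
  constructor
  · rw [lap, le_div_iff₀ hd']
    linarith
  · rw [lap, div_le_one hd']
    linarith

end Nbhd

theorem stmt7 (n : ℕ) (h : 12 ≤ n - 1) (hub y : Fin n)
    (hhub : hub.val = 0) (hy : y ≠ hub) :
    kappaLLY (wheel n) hub y ≤ 8 / ((n : ℝ) - 1) - 2 / 3 ∧
      8 / ((n : ℝ) - 1) - 2 / 3 ≤ 0 := by
  obtain ⟨m, rfl⟩ : ∃ m, n = m + 1 := ⟨n - 1, by omega⟩
  have hm : 12 ≤ m := by omega
  haveI : NeZero m := ⟨by omega⟩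
  have hmR : (0 : ℝ) < (m : ℝ) := by
    have : (12 : ℝ) ≤ (m : ℝ) := by exact_mod_cast hm
    linarith
  have hcast : ((m + 1 : ℕ) : ℝ) - 1 = (m : ℝ) := by push_cast; ring
  have hy' : y.val ≠ 0 := fun h0 => hy (Fin.val_injective (h0.trans hhub.symm))
  set G := wheel (m + 1) with hG
  set i₀ := idx m y with hi₀
  set f := fw m i₀ with hf
  -- basic values of f
  have hfhub : f hub = 0 := by rw [hf, fw, if_pos hhub]
  have hfy : f y = 1 := by
    rw [hf, fw, if_neg hy', ← hi₀, sub_self]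
    simp [hwf]
  have hfv1 : f (vtx m (i₀ + 1)) = 1 := by
    rw [hf, fw_vtx]
    have : i₀ + 1 - i₀ = 1 := by ring
    rw [this]; simp [hwf]
  have hfv2 : f (vtx m (i₀ - 1)) = 1 := by
    rw [hf, fw_vtx]
    have : i₀ - 1 - i₀ = -1 := by ring
    rw [this]; simp [hwf]
  -- Laplacian at the hub
  have hS : ∑ w ∈ Finset.univ.erase hub, f w = 8 - (m : ℤ) := by
    have h1 : ∑ w ∈ Finset.univ.erase hub, f w = ∑ i : ZMod m, hwf (i - i₀) := by
      refine Finset.sum_nbij' (fun z => idx m z) (fun i => vtx m i)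
        (fun a _ => Finset.mem_univ _) (fun i _ => ?_) (fun a ha => ?_)
        (fun i _ => idx_vtx m i) (fun a ha => ?_)
      · refine Finset.mem_erase.mpr ⟨fun hh => vtx_val_ne m i ?_, Finset.mem_univ _⟩
        exact (congrArg Fin.val hh).trans hhub
      · have ha' : a.val ≠ 0 := by
          intro h0
          exact (Finset.mem_erase.mp ha).1 (Fin.val_injective (h0.trans hhub.symm))
        exact vtx_idx m a ha'
      · have ha' : a.val ≠ 0 := by
          intro h0
          exact (Finset.mem_erase.mp ha).1 (Fin.val_injective (h0.trans hhub.symm))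
        rw [hf, fw, if_neg ha']
    have h2 : ∑ i : ZMod m, hwf (i - i₀) = ∑ j : ZMod m, hwf j :=
      Fintype.sum_equiv (Equiv.subRight i₀) _ _ (fun i => rfl)
    rw [h1, h2, hwf_sum hm]
  have hlap_hub : lap G f hub = ((8 : ℝ) - (m : ℝ)) / (m : ℝ) := by
    rw [lap, deg_hub m hub hhub, nbhd_hub m hub hhub]
    have : ∑ w ∈ Finset.univ.erase hub, ((f w : ℝ) - (f hub : ℝ))
        = ((∑ w ∈ Finset.univ.erase hub, f w : ℤ) : ℝ) := by
      rw [hfhub]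
      push_cast
      ring
    rw [this, hS]
    push_cast
    ring
  -- Laplacian at y
  have hnmem1 : hub ∉ ({vtx m (i₀ + 1), vtx m (i₀ - 1)} : Finset (Fin (m + 1))) := by
    simp [hub_ne_vtx m hub hhub]
  have hnmem2 : vtx m (i₀ + 1) ∉ ({vtx m (i₀ - 1)} : Finset (Fin (m + 1))) := by
    simp [vtx_add_ne_sub m hm i₀]
  have hlap_y : lap G f y = -1 / 3 := by
    rw [lap, deg_y m hm hub y hhub hy', nbhd_y m hm hub y hhub hy', ← hi₀]
    rw [Finset.sum_insert hnmem1, Finset.sum_insert hnmem2, Finset.sum_singleton]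
    rw [hfhub, hfy, hfv1, hfv2]
    norm_num
  -- membership of the witness value
  have hmem : lap G f hub - lap G f y ∈ { r : ℝ | ∃ g : Fin (m + 1) → ℤ,
      (∀ u ∈ insert hub (G.neighborSet hub) ∪ insert y (G.neighborSet y),
        ∀ v ∈ insert hub (G.neighborSet hub) ∪ insert y (G.neighborSet y),
          |g u - g v| ≤ (G.dist u v : ℤ)) ∧
      g y - g hub = 1 ∧ r = lap G g hub - lap G g y } := by
    refine ⟨f, fun u _ v _ => fw_lip m hm i₀ u v, ?_, rfl⟩
    rw [hfy, hfhub]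
    ring
  -- bounded below
  have hbdd : BddBelow { r : ℝ | ∃ g : Fin (m + 1) → ℤ,
      (∀ u ∈ insert hub (G.neighborSet hub) ∪ insert y (G.neighborSet y),
        ∀ v ∈ insert hub (G.neighborSet hub) ∪ insert y (G.neighborSet y),
          |g u - g v| ≤ (G.dist u v : ℤ)) ∧
      g y - g hub = 1 ∧ r = lap G g hub - lap G g y } := by
    refine ⟨-2, ?_⟩
    rintro r ⟨g, hgL, hg1, rfl⟩
    have hdh : 0 < G.degree hub := by rw [deg_hub m hub hhub]; omega
    have hdy : 0 < G.degree y := by rw [deg_y m hm hub y hhub hy']; omega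
    have hLh : ∀ w ∈ G.neighborFinset hub, |g w - g hub| ≤ 1 := by
      intro w hw
      have hadj : G.Adj hub w := (SimpleGraph.mem_neighborFinset _ _ _).mp hw
      have hd1 : G.dist w hub = 1 := SimpleGraph.dist_eq_one_iff_adj.mpr hadj.symm
      have := hgL w (Set.mem_union_left _ (Set.mem_insert_iff.mpr (Or.inr hadj)))
        hub (Set.mem_union_left _ (Set.mem_insert _ _))
      rw [hd1] at this
      exact_mod_cast this
    have hLy : ∀ w ∈ G.neighborFinset y, |g w - g y| ≤ 1 := by
      intro w hw
      have hadj : G.Adj y w := (SimpleGraph.mem_neighborFinset _ _ _).mp hw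
      have hd1 : G.dist w y = 1 := SimpleGraph.dist_eq_one_iff_adj.mpr hadj.symm
      have := hgL w (Set.mem_union_right _ (Set.mem_insert_iff.mpr (Or.inr hadj)))
        y (Set.mem_union_right _ (Set.mem_insert _ _))
      rw [hd1] at this
      exact_mod_cast this
    have hb1 := lap_pm g hub hdh hLh
    have hb2 := lap_pm g y hdy hLy
    linarith [hb1.1, hb2.2]
  have hk : kappaLLY G hub y ≤ lap G f hub - lap G f y := by
    rw [kappaLLY]
    exact csInf_le hbdd hmem
  constructor
  · rw [hlap_hub, hlap_y] at hk
    calc kappaLLY G hub y ≤ ((8 : ℝ) - (m : ℝ)) / (m : ℝ) - (-1 / 3) := hk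
      _ = 8 / (((m + 1 : ℕ) : ℝ) - 1) - 2 / 3 := by
          rw [hcast]
          field_simp
          ring
  · rw [hcast]
    rw [sub_nonpos, div_le_div_iff₀ hmR (by norm_num : (0:ℝ) < 3)]
    have : (12 : ℝ) ≤ (m : ℝ) := by exact_mod_cast hm
    linarith
end

section
/- Let G = H(T,C) be a generalized Halin graph and let x be a vertex of T of maximum degree D(T) ≥ 3, with components A_1, …, A_c of T − x labeled in clockwise order. If some component A_i contains at least two cycle vertices and an adjacent component A_{i−1} also contains at least two cycle vertices, then the cycle edge joining the last leaf of A_{i−1} and the first leaf of A_i is not contained in any triangle or 4-cycle of G. -/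
open SimpleGraph

attribute [local instance] Classical.propDecidable

variable {V : Type*}

section Aux

open SimpleGraph Walk

variable {T : SimpleGraph V}

lemma sc_symm {x u v : V} (h : SameComp T x u v) : SameComp T x v u := by
  obtain ⟨w, hw⟩ := h
  exact ⟨w.reverse, by rwa [Walk.support_reverse, List.mem_reverse]⟩

lemma sc_trans {x u v w : V} (h1 : SameComp T x u v) (h2 : SameComp T x v w) :
    SameComp T x u w := by
  obtain ⟨p, hp⟩ := h1; obtain ⟨q, hq⟩ := h2
  refine ⟨p.append q, ?_⟩
  rw [Walk.mem_support_append_iff]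
  tauto

lemma sc_refl {x u : V} (h : u ≠ x) : SameComp T x u u :=
  ⟨Walk.nil, by simp [Ne.symm h]⟩

lemma sc_adj {x u v : V} (h : T.Adj u v) (hu : u ≠ x) (hv : v ≠ x) :
    SameComp T x u v := by
  refine ⟨Walk.cons h Walk.nil, ?_⟩
  simp only [Walk.support_cons, Walk.support_nil, List.mem_cons, List.mem_singleton,
    List.not_mem_nil]
  rintro (rfl | rfl | h') <;> simp_all

lemma walk_closed {S : Set V} (hS : ∀ u ∈ S, ∀ v, T.Adj u v → v ∈ S)
    {u v : V} (w : T.Walk u v) (hu : u ∈ S) : v ∈ S := by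
  induction w with
  | nil => exact hu
  | cons h p ih => exact ih (hS _ hu _ h)

lemma leaf_nbr_unique [Fintype V] {a b c : V} (ha : T.degree a = 1)
    (hb : T.Adj a b) (hc : T.Adj a c) : b = c := by
  have h1 : (T.neighborFinset a).card ≤ 1 := le_of_eq ha
  exact Finset.card_le_one.mp h1 b ((T.mem_neighborFinset a b).mpr hb) c
    ((T.mem_neighborFinset a c).mpr hc)

lemma no_adj_leaves [Fintype V] (hconn : T.Connected) {x a b : V}
    (hx : 3 ≤ T.degree x) (ha : T.degree a = 1) (hb : T.degree b = 1) (hab : T.Adj a b) :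
    False := by
  have hS : ∀ u ∈ ({a, b} : Set V), ∀ v, T.Adj u v → v ∈ ({a, b} : Set V) := by
    rintro u (rfl | rfl) v huv
    · right; exact (leaf_nbr_unique ha hab huv).symm ▸ rfl
    · left; exact (leaf_nbr_unique hb hab.symm huv).symm ▸ rfl
  obtain ⟨w⟩ := hconn a x
  have hx' : x ∈ ({a, b} : Set V) := walk_closed hS w (by left; rfl)
  rcases hx' with rfl | rfl <;> omega

lemma samecomp_eq_of_adj_x [Fintype V] {x u v : V} (hv : T.degree v = 1)
    (hxv : T.Adj x v) (h : SameComp T x u v) : u = v := by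
  obtain ⟨w, hw⟩ := h
  have hw' : x ∉ w.reverse.support := by rwa [Walk.support_reverse, List.mem_reverse]
  have key : ∀ {u' : V} (w' : T.Walk v u'), x ∉ w'.support → v = u' := by
    intro u' w' hsup
    cases w' with
    | nil => rfl
    | cons hadj p =>
      exfalso
      apply hsup
      rw [Walk.support_cons]
      have : _ = x := leaf_nbr_unique hv hadj hxv.symm
      right
      rw [← this]
      exact p.start_mem_support
  exact (key w.reverse hw').symm

lemma nbrs_not_samecomp (hT : T.IsTree) {x y y' : V}
    (hy : T.Adj x y) (hy' : T.Adj x y') (hne : y ≠ y') (h : SameComp T x y y') : False := by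
  obtain ⟨w, hw⟩ := h
  have hxP : x ∉ w.bypass.support := fun hh => hw (w.support_bypass_subset hh)
  have hRpath : (Walk.cons hy' w.bypass.reverse).IsPath := by
    apply w.bypass_isPath.reverse.cons
    rwa [Walk.support_reverse, List.mem_reverse]
  have hQpath : (Walk.cons hy' w.bypass.reverse).reverse.IsPath := hRpath.reverse
  have hedge : s(x, y) ∉ (Walk.cons hy' w.bypass.reverse).reverse.edges := by
    rw [Walk.edges_reverse, List.mem_reverse, Walk.edges_cons, List.mem_cons]
    rintro (h1 | h1)
    · rw [Sym2.congr_right] at h1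
      exact hne h1
    · rw [Walk.edges_reverse, List.mem_reverse] at h1
      exact hxP (w.bypass.fst_mem_support_of_mem_edges h1)
  have hcyc : (Walk.cons hy ((Walk.cons hy' w.bypass.reverse).reverse)).IsCycle :=
    (Walk.cons_isCycle_iff _ hy).mpr ⟨hQpath, hedge⟩
  exact hT.IsAcyclic _ hcyc

lemma exists_leaf_in_comp [Fintype V] (hT : T.IsTree) (x : V) :
    ∀ (k : ℕ) (y : V), y ≠ x → Fintype.card V - T.dist x y ≤ k →
      ∃ z, T.degree z = 1 ∧ SameComp T x y z := by
  intro k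
  induction k with
  | zero =>
    intro y hy hk
    exfalso
    obtain ⟨p, hp⟩ := hT.isConnected.exists_walk_length_eq_dist x y
    have hPlen : p.bypass.length = T.dist x y :=
      le_antisymm (hp ▸ p.length_bypass_le) (SimpleGraph.dist_le _)
    have hdlt : T.dist x y < Fintype.card V := hPlen ▸ p.bypass_isPath.length_lt
    omega
  | succ n ih =>
    intro y hy hk
    by_cases hdeg : T.degree y = 1
    · exact ⟨y, hdeg, sc_refl hy⟩
    obtain ⟨p, hp⟩ := hT.isConnected.exists_walk_length_eq_dist x y
    set d := T.dist x y with hd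
    have hdpos : 0 < d := hT.isConnected.pos_dist_of_ne (Ne.symm hy)
    have hPpath := p.bypass_isPath
    have hPlen : p.bypass.length = d := le_antisymm (hp ▸ p.length_bypass_le)
      (SimpleGraph.dist_le _)
    have hdlt : d < Fintype.card V := hPlen ▸ hPpath.length_lt
    obtain ⟨w0, h0, q, hq⟩ := Walk.exists_eq_cons_of_ne hy p.bypass.reverse
    have hqlen : q.length + 1 = d := by
      have := congrArg Walk.length hq
      rw [Walk.length_reverse, Walk.length_cons, hPlen] at this
      omega
    have hw0 : T.dist x w0 ≤ d - 1 := by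
      have h1 : T.dist w0 x ≤ q.length := SimpleGraph.dist_le q
      rw [SimpleGraph.dist_comm] at h1
      omega
    have hdeg2 : 1 < T.degree y := by
      have hpos : 0 < (T.neighborFinset y).card :=
        Finset.card_pos.mpr ⟨w0, (T.mem_neighborFinset y w0).mpr h0⟩
      have : (T.neighborFinset y).card = T.degree y := rfl
      omega
    obtain ⟨w, hwmem, hww0⟩ := Finset.exists_mem_ne hdeg2 w0
    have hadj : T.Adj y w := (T.mem_neighborFinset y w).mp hwmem
    have hwx : w ≠ x := by
      intro hwxe
      have hd1 : d = 1 := SimpleGraph.dist_eq_one_iff_adj.mpr (hwxe ▸ hadj).symm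
      have hz : T.dist x w0 = 0 := by omega
      exact hww0 (hwxe.trans (hT.isConnected.dist_eq_zero_iff.mp hz))
    have hkey : ¬ T.dist x w ≤ d := by
      intro hle
      have hne0 : T.dist x w ≠ 0 := fun h0' =>
        hwx (hT.isConnected.dist_eq_zero_iff.mp h0').symm
      obtain ⟨pw, hpw⟩ := SimpleGraph.exists_walk_of_dist_ne_zero hne0
      have hPwpath := pw.bypass_isPath
      have hPwlen : pw.bypass.length ≤ d :=
        le_trans (le_trans pw.length_bypass_le (le_of_eq hpw)) hle
      by_cases hymem : y ∈ pw.bypass.support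
      · have hspec := pw.bypass.take_spec hymem
        have hlen : (pw.bypass.takeUntil y hymem).length
            + (pw.bypass.dropUntil y hymem).length = pw.bypass.length := by
          rw [← Walk.length_append, hspec]
        have h1 : d ≤ (pw.bypass.takeUntil y hymem).length := SimpleGraph.dist_le _
        have h0' : (pw.bypass.dropUntil y hymem).length = 0 := by omega
        exact hadj.ne (Walk.eq_of_length_eq_zero h0')
      · have hQpath : (Walk.cons hadj pw.bypass.reverse).IsPath := by
          apply hPwpath.reverse.cons
          rwa [Walk.support_reverse, List.mem_reverse]
        have heq : p.bypass.reverse = Walk.cons hadj pw.bypass.reverse :=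
          (hT.existsUnique_path y x).unique hPpath.reverse hQpath
        rw [hq] at heq
        have hsup := congrArg Walk.support heq
        rw [Walk.support_cons, Walk.support_cons] at hsup
        have htail : q.support = pw.bypass.reverse.support :=
          (List.cons_eq_cons.mp hsup).2
        rw [q.support_eq_cons, pw.bypass.reverse.support_eq_cons] at htail
        exact hww0 (List.cons_eq_cons.mp htail).1.symm
    have hup : T.dist x w ≤ d + 1 := by
      have ht := hT.isConnected.dist_triangle (u := x) (v := y) (w := w)
      rw [SimpleGraph.dist_eq_one_iff_adj.mpr hadj] at ht
      omega
    have hdw : T.dist x w = d + 1 := by omega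
    obtain ⟨z, hz1, hz2⟩ := ih w hwx (by rw [hdw]; omega)
    exact ⟨z, hz1, sc_trans (sc_adj hadj hy hwx) hz2⟩

end Aux

theorem stmt11 {V : Type*} [Fintype V] (T : SimpleGraph V) (hT : T.IsTree)
    (ℓ : ℕ) (hℓ : 3 ≤ ℓ) (σ : ZMod ℓ → V) (hinj : Function.Injective σ)
    (hleaf : ∀ v : V, v ∈ Set.range σ ↔ T.degree v = 1)
    (x : V) (hmax : ∀ v : V, T.degree v ≤ T.degree x) (hx : 3 ≤ T.degree x)
    (i : ZMod ℓ)
    (hdiff : ¬ SameComp T x (σ i) (σ (i + 1)))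
    (hA1 : SameComp T x (σ (i - 1)) (σ i))
    (hA2 : SameComp T x (σ (i + 1)) (σ (i + 2))) :
    noC3C4 (halinGraph T σ) (σ i) (σ (i + 1)) := by
  have hNZ : NeZero ℓ := ⟨by omega⟩
  set G := halinGraph T σ with hG
  have hconn := hT.isConnected
  have hleafd : ∀ j : ZMod ℓ, T.degree (σ j) = 1 := fun j => (hleaf _).mp ⟨j, rfl⟩
  have hlx : ∀ j : ZMod ℓ, σ j ≠ x := fun j h => by
    have h1 := hleafd j; rw [h] at h1; omega
  have hcast : ∀ m : ℕ, (m : ZMod ℓ) = 0 → ℓ ∣ m := fun m h =>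
    (ZMod.natCast_eq_zero_iff m ℓ).mp h
  have h10 : (1 : ZMod ℓ) ≠ 0 := by
    intro h
    have := Nat.le_of_dvd one_pos (hcast 1 (by exact_mod_cast h)); omega
  have h20 : (2 : ZMod ℓ) ≠ 0 := by
    intro h
    have := Nat.le_of_dvd two_pos (hcast 2 (by exact_mod_cast h)); omega
  have hnoleafadj : ∀ a b : ZMod ℓ, ¬ T.Adj (σ a) (σ b) := fun a b h =>
    no_adj_leaves hconn hx (hleafd a) (hleafd b) h
  have hcomb : σ (i - 1) ≠ σ (i + 2) := by
    intro h
    exact hdiff (sc_symm (sc_trans (h.symm ▸ hA2) hA1))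
  have hxp : ¬ T.Adj x (σ i) := by
    intro h
    have h1 := hinj (samecomp_eq_of_adj_x (hleafd i) h hA1)
    exact h10 (by linear_combination -h1)
  have hxq : ¬ T.Adj x (σ (i + 1)) := by
    intro h
    have h1 := hinj (samecomp_eq_of_adj_x (hleafd (i + 1)) h (sc_symm hA2))
    exact h10 (by linear_combination h1)
  have hGadj : ∀ a b : V, G.Adj a b → T.Adj a b ∨
      ∃ j : ZMod ℓ, (a = σ j ∧ b = σ (j + 1)) ∨ (b = σ j ∧ a = σ (j + 1)) := by
    intro a b hab
    rw [hG, halinGraph, SimpleGraph.sup_adj, SimpleGraph.fromRel_adj] at hab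
    rcases hab with h | ⟨-, ⟨j, hj⟩ | ⟨j, hj⟩⟩
    · exact Or.inl h
    · exact Or.inr ⟨j, Or.inl hj⟩
    · exact Or.inr ⟨j, Or.inr hj⟩
  have hGadjσ : ∀ (k : ZMod ℓ) (b : V), G.Adj (σ k) b →
      T.Adj (σ k) b ∨ b = σ (k + 1) ∨ b = σ (k - 1) := by
    intro k b h
    rcases hGadj _ _ h with h' | ⟨j, ⟨h1, h2⟩ | ⟨h1, h2⟩⟩
    · exact Or.inl h'
    · right; left; rw [h2, hinj h1]
    · right; right
      rw [h1]
      congr 1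
      have h3 := hinj h2
      linear_combination -h3
  constructor
  · rintro z ⟨hpz, hzq⟩
    rcases hGadjσ i z hpz with htz | hz1 | hz2
    · -- z is the tree neighbor of σ i
      have hznr : z ∉ Set.range σ := by
        rintro ⟨j, rfl⟩
        exact hnoleafadj i j htz
      have hznx : z ≠ x := by
        rintro rfl
        exact hxp htz.symm
      rcases hGadjσ (i + 1) z hzq.symm with h | h | h
      · exact hdiff (sc_trans (sc_adj htz (hlx i) hznx) (sc_adj h.symm hznx (hlx (i + 1))))
      · exact hznr ⟨i + 1 + 1, h.symm⟩
      · exact hznr ⟨i + 1 - 1, h.symm⟩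
    · subst hz1
      exact G.irrefl hzq
    · subst hz2
      rcases hGadjσ (i + 1) (σ (i - 1)) hzq.symm with h | h | h
      · exact hnoleafadj (i + 1) (i - 1) h
      · refine hcomb (h.trans ?_)
        congr 1
        ring
      · have h1 := hinj h
        exact h10 (by linear_combination -h1)
  · rintro u v hpu huv hvq
    by_cases huq : u = σ (i + 1)
    · exact Or.inl huq
    by_cases hvp : v = σ i
    · exact Or.inr hvp
    exfalso
    rcases hGadjσ i u hpu with htu | hu1 | hu2
    · have hunr : u ∉ Set.range σ := by
        rintro ⟨j, rfl⟩
        exact hnoleafadj i j htu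
      have hunx : u ≠ x := by
        rintro rfl
        exact hxp htu.symm
      rcases hGadjσ (i + 1) v hvq.symm with htv | hv1 | hv2
      · have hvnx : v ≠ x := by
          rintro rfl
          exact hxq htv.symm
        rcases hGadj u v huv with ht | ⟨j, ⟨h1, h2⟩ | ⟨h1, h2⟩⟩
        · exact hdiff (sc_trans (sc_adj htu (hlx i) hunx)
            (sc_trans (sc_adj ht hunx hvnx) (sc_adj htv.symm hvnx (hlx (i + 1)))))
        · exact hunr ⟨j, h1.symm⟩
        · exact hunr ⟨j + 1, h2.symm⟩
      · rcases hGadj u v huv with ht | ⟨j, ⟨h1, h2⟩ | ⟨h1, h2⟩⟩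
        · rw [hv1] at ht
          have he : i + 1 + 1 = i + 2 := by ring
          rw [he] at ht
          exact hdiff (sc_trans (sc_adj htu (hlx i) hunx)
            (sc_trans (sc_adj ht hunx (hlx (i + 2))) (sc_symm hA2)))
        · exact hunr ⟨j, h1.symm⟩
        · exact hunr ⟨j + 1, h2.symm⟩
      · apply hvp
        rw [hv2]
        congr 1
        ring
    · exact huq hu1
    · subst hu2
      rcases hGadjσ (i + 1) v hvq.symm with htv | hv1 | hv2
      · have hvnx : v ≠ x := by
          rintro rfl
          exact hxq htv.symm
        have hvnr : v ∉ Set.range σ := by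
          rintro ⟨j, rfl⟩
          exact hnoleafadj (i + 1) j htv
        rcases hGadj _ v huv with ht | ⟨j, ⟨h1, h2⟩ | ⟨h1, h2⟩⟩
        · exact hdiff (sc_trans (sc_symm hA1)
            (sc_trans (sc_adj ht (hlx (i - 1)) hvnx) (sc_adj htv.symm hvnx (hlx (i + 1)))))
        · exact hvnr ⟨j + 1, h2.symm⟩
        · exact hvnr ⟨j, h1.symm⟩
      · rw [hv1] at huv
        rcases hGadjσ (i - 1) _ huv with ht | h | h
        · exact hnoleafadj _ _ ht
        · have h1 := hinj h
          exact h20 (by linear_combination h1)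
        · have h1 := hinj h
          have h40 : ((4 : ℕ) : ZMod ℓ) = 0 := by push_cast; linear_combination h1
          have hdvd := hcast 4 h40
          have hle4 := Nat.le_of_dvd (by norm_num) hdvd
          have hl4 : ℓ = 4 := by
            have h34 : ℓ = 3 ∨ ℓ = 4 := by omega
            rcases h34 with h3 | h4
            · subst h3; norm_num at hdvd
            · exact h4
          subst hl4
          have h3card : 3 ≤ (T.neighborFinset x).card := hx
          obtain ⟨y1, hy1⟩ := Finset.card_pos.mp
            (show 0 < (T.neighborFinset x).card by omega)
          obtain ⟨y2, hy2, h21⟩ := Finset.exists_mem_ne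
            (show 1 < (T.neighborFinset x).card by omega) y1
          have h2c : 1 < ((T.neighborFinset x).erase y1).card := by
            rw [Finset.card_erase_of_mem hy1]; omega
          obtain ⟨y3, hy3', h32⟩ := Finset.exists_mem_ne h2c y2
          have hy3 : y3 ∈ T.neighborFinset x := Finset.mem_of_mem_erase hy3'
          have h31 : y3 ≠ y1 := Finset.ne_of_mem_erase hy3'
          have ha1 : T.Adj x y1 := (T.mem_neighborFinset x y1).mp hy1
          have ha2 : T.Adj x y2 := (T.mem_neighborFinset x y2).mp hy2
          have ha3 : T.Adj x y3 := (T.mem_neighborFinset x y3).mp hy3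
          have hclass : ∀ j : ZMod 4,
              SameComp T x (σ j) (σ i) ∨ SameComp T x (σ j) (σ (i + 1)) := by
            intro j
            have h4 : j = i ∨ j = i + 1 ∨ j = i + 2 ∨ j = i - 1 := by
              have hall : ∀ m : ZMod 4, m = 0 ∨ m = 1 ∨ m = 2 ∨ m = 3 := by decide
              have h31' : (3 : ZMod 4) = -1 := by decide
              rcases hall (j - i) with h' | h' | h' | h'
              · left; linear_combination h'
              · right; left; linear_combination h'
              · right; right; left; linear_combination h'
              · right; right; right; rw [h31'] at h'; linear_combination h'
            rcases h4 with h' | h' | h' | h'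
            · rw [h']; exact Or.inl (sc_refl (hlx i))
            · rw [h']; exact Or.inr (sc_refl (hlx (i + 1)))
            · rw [h']; exact Or.inr (sc_symm hA2)
            · rw [h']; exact Or.inl hA1
          have hcls : ∀ y : V, T.Adj x y →
              SameComp T x y (σ i) ∨ SameComp T x y (σ (i + 1)) := by
            intro y hy
            obtain ⟨z, hz1, hz2⟩ :=
              exists_leaf_in_comp hT x (Fintype.card V) y hy.ne' (Nat.sub_le _ _)
            obtain ⟨j, hj⟩ := (hleaf z).mpr hz1
            rw [← hj] at hz2
            rcases hclass j with h' | h'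
            · exact Or.inl (sc_trans hz2 h')
            · exact Or.inr (sc_trans hz2 h')
          rcases hcls y1 ha1 with hc1 | hc1 <;> rcases hcls y2 ha2 with hc2 | hc2 <;>
            rcases hcls y3 ha3 with hc3 | hc3
          · exact nbrs_not_samecomp hT ha1 ha2 h21.symm (sc_trans hc1 (sc_symm hc2))
          · exact nbrs_not_samecomp hT ha1 ha2 h21.symm (sc_trans hc1 (sc_symm hc2))
          · exact nbrs_not_samecomp hT ha1 ha3 h31.symm (sc_trans hc1 (sc_symm hc3))
          · exact nbrs_not_samecomp hT ha2 ha3 h32.symm (sc_trans hc2 (sc_symm hc3))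
          · exact nbrs_not_samecomp hT ha2 ha3 h32.symm (sc_trans hc2 (sc_symm hc3))
          · exact nbrs_not_samecomp hT ha1 ha3 h31.symm (sc_trans hc1 (sc_symm hc3))
          · exact nbrs_not_samecomp hT ha1 ha2 h21.symm (sc_trans hc1 (sc_symm hc2))
          · exact nbrs_not_samecomp hT ha1 ha2 h21.symm (sc_trans hc1 (sc_symm hc2))
      · apply hvp
        rw [hv2]
        congr 1
        ring
end

section
/- Let G = H(T,C) be a generalized Halin graph with positive Lin-Lu-Yau curvature on every edge, and let x attain the maximum degree D(T) of T. If a component A_i of T − x contains at least two cycle vertices, then both neighboring components A_{i−1} and A_{i+1} (indices mod c) contain exactly one cycle vertex. -/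
open SimpleGraph

attribute [local instance] Classical.propDecidable

variable {V : Type*}

/-!
Suppose the consecutive leaves `σ a` and `σ (a + 1)` lie in different components `A` and `B` of
`T − x`, each containing at least two leaves. A leaf adjacent to `x` is alone in its component, so
the tree-neighbours of `σ a` and `σ (a + 1)` lie in `A` and `B`; by contiguity of the components
along the cycle, `σ (a + 2) ∉ A` and `σ (a - 1) ∉ B`; and a third branch at `x` carries a further
leaf, so the cycle has length at least five. Hence the cycle edge `σ a σ (a + 1)` lies in no
triangle and no 4-cycle, and both its ends have degree 3, so the Lin–Lu–Yau bound
`κ ≤ 1/d + 2/d' - 1` makes its curvature nonpositive. The theorem applies this to the two cycle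
edges leaving the component of `σ j`.
-/

namespace SameComp

variable {T : SimpleGraph V} {x u v w : V}

lemma refl (h : x ≠ u) : SameComp T x u u :=
  ⟨.nil, by simpa [eq_comm] using h⟩

lemma symm (h : SameComp T x u v) : SameComp T x v u := by
  obtain ⟨p, hp⟩ := h
  exact ⟨p.reverse, by simpa using hp⟩

lemma trans (h : SameComp T x u v) (h' : SameComp T x v w) : SameComp T x u w := by
  obtain ⟨p, hp⟩ := h
  obtain ⟨q, hq⟩ := h'
  exact ⟨p.append q, by simp [Walk.mem_support_append_iff, hp, hq]⟩

lemma ne_left (h : SameComp T x u v) : x ≠ u := by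
  obtain ⟨p, hp⟩ := h
  exact fun hxu => hp (hxu ▸ p.start_mem_support)

lemma of_adj (h : T.Adj u v) (hu : x ≠ u) (hv : x ≠ v) : SameComp T x u v :=
  ⟨h.toWalk, by simp [hu, hv]⟩

lemma eq_of_adj_of_degree_eq_one [Fintype V] (hu : T.degree u = 1) (hux : T.Adj u x)
    (h : SameComp T x u v) : v = u := by
  obtain ⟨p, hp⟩ := h
  by_contra hvu
  obtain ⟨y, huy, q, rfl⟩ := Walk.exists_eq_cons_of_ne (Ne.symm hvu) p
  obtain ⟨z, -, hz⟩ := degree_eq_one_iff_existsUnique_adj.mp hu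
  have hyx : y = x := (hz y huy).trans (hz x hux).symm
  exact hp (by simp [← hyx])

end SameComp

namespace SimpleGraph

variable {T : SimpleGraph V}

lemma IsTree.length_eq_dist_of_isPath (hT : T.IsTree) {u v : V} {p : T.Walk u v}
    (hp : p.IsPath) : p.length = T.dist u v := by
  obtain ⟨q, hq, hql⟩ := hT.connected.exists_path_of_dist u v
  rw [← hql, (hT.existsUnique_path u v).unique hp hq]

lemma IsTree.exists_adj_dist_eq_add_one [Fintype V] (hT : T.IsTree) {x y : V} (hxy : x ≠ y)
    (hy : T.degree y ≠ 1) : ∃ w, T.Adj y w ∧ T.dist x w = T.dist x y + 1 := by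
  obtain ⟨p, hp, hpl⟩ := hT.connected.exists_path_of_dist x y
  have hnil : ¬ p.Nil := Walk.not_nil_of_ne hxy
  have hpen : T.Adj y p.penultimate := (p.adj_penultimate hnil).symm
  have hdeg : 1 < (T.neighborFinset y).card := by
    rw [card_neighborFinset_eq_degree]
    have := (T.degree_pos_iff_exists_adj y).2 ⟨_, hpen⟩
    omega
  obtain ⟨w, hw, hwpen⟩ := Finset.exists_mem_ne hdeg p.penultimate
  have hyw : T.Adj y w := (T.mem_neighborFinset y w).1 hw
  have hwp : w ∉ p.support := fun h =>
    hwpen (hT.isAcyclic.eq_penultimate_of_adj_end hp hyw h)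
  refine ⟨w, hyw, ?_⟩
  rw [← hT.length_eq_dist_of_isPath (hp.concat hwp hyw), Walk.length_concat, hpl]

lemma IsTree.exists_degree_eq_one_sameComp [Fintype V] (hT : T.IsTree) {x y : V}
    (hxy : x ≠ y) : ∃ z, T.degree z = 1 ∧ SameComp T x z y := by
  obtain ⟨z, hzy, hmax⟩ := (Finset.univ.filter fun z => SameComp T x z y).exists_max_image
    (T.dist x) ⟨y, by simpa using SameComp.refl hxy⟩
  simp only [Finset.mem_filter, Finset.mem_univ, true_and] at hzy hmax
  refine ⟨z, by_contra fun hz => ?_, hzy⟩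
  obtain ⟨w, hzw, hw⟩ := hT.exists_adj_dist_eq_add_one hzy.ne_left hz
  have hxw : x ≠ w := by
    rintro rfl
    simp at hw
  have := hmax w ((SameComp.of_adj hzw.symm hxw hzy.ne_left).trans hzy)
  omega

lemma IsTree.not_sameComp_of_adj [Fintype V] (hT : T.IsTree) {x y₁ y₂ : V}
    (h₁ : T.Adj x y₁) (h₂ : T.Adj x y₂) (hne : y₁ ≠ y₂) : ¬ SameComp T x y₁ y₂ := by
  rintro ⟨p, hp⟩
  have hpath : (Walk.cons h₁.symm (Walk.cons h₂ .nil)).IsPath := by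
    simp [h₁.ne', h₂.ne, hne]
  have := (hT.existsUnique_path y₁ y₂).unique p.toPath.2 hpath
  exact hp (p.support_toPath_subset_support (by simp [this]))

lemma Connected.not_adj_of_degree_eq_one [Fintype V]
    (hc : T.Connected) {a b x : V} (ha : T.degree a = 1) (hb : T.degree b = 1)
    (hx : 3 ≤ T.degree x) : ¬ T.Adj a b := by
  intro hab
  have hunique : ∀ {u v w : V}, T.degree u = 1 → T.Adj u v → T.Adj u w → v = w := fun hu hv hw => by
    obtain ⟨z, -, hz⟩ := degree_eq_one_iff_existsUnique_adj.mp hu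
    exact (hz _ hv).trans (hz _ hw).symm
  obtain ⟨p, hp⟩ := hc.exists_isPath a x
  cases p with
  | nil => omega
  | cons hac p =>
    obtain rfl := hunique ha hac hab
    cases p with
    | nil => omega
    | cons hbd p =>
      obtain rfl := hunique hb hbd hab.symm
      simp at hp

lemma IsTree.exists_degree_eq_one_not_sameComp [Fintype V]
    (hT : T.IsTree) {x : V} (hx : 3 ≤ T.degree x) (u v : V) :
    ∃ z, T.degree z = 1 ∧ ¬ SameComp T x z u ∧ ¬ SameComp T x z v := by
  obtain ⟨s, hs, hs3⟩ := Finset.exists_subset_card_eq (s := T.neighborFinset x) (n := 3)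
    (by rwa [card_neighborFinset_eq_degree])
  obtain ⟨y₁, y₂, y₃, h₁₂, h₁₃, h₂₃, rfl⟩ := Finset.card_eq_three.mp hs3
  have hx₁ : T.Adj x y₁ := (T.mem_neighborFinset x _).1 (hs (by simp))
  have hx₂ : T.Adj x y₂ := (T.mem_neighborFinset x _).1 (hs (by simp))
  have hx₃ : T.Adj x y₃ := (T.mem_neighborFinset x _).1 (hs (by simp))
  -- of three branches at `x`, at most one contains `u` and at most one contains `v`
  obtain ⟨y, hxy, hyu, hyv⟩ : ∃ y, T.Adj x y ∧ ¬ SameComp T x y u ∧ ¬ SameComp T x y v := by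
    by_contra! h
    replace h : ∀ y, T.Adj x y → SameComp T x y u ∨ SameComp T x y v :=
      fun y hy => or_iff_not_imp_left.2 (h y hy)
    have hsame : ∀ {a b c : V}, SameComp T x a c → SameComp T x b c → SameComp T x a b :=
      fun hac hbc => hac.trans hbc.symm
    rcases h y₁ hx₁ with h₁ | h₁ <;> rcases h y₂ hx₂ with h₂ | h₂ <;>
      rcases h y₃ hx₃ with h₃ | h₃ <;>
      first
      | exact hT.not_sameComp_of_adj hx₁ hx₂ h₁₂ (hsame h₁ h₂)
      | exact hT.not_sameComp_of_adj hx₁ hx₃ h₁₃ (hsame h₁ h₃)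
      | exact hT.not_sameComp_of_adj hx₂ hx₃ h₂₃ (hsame h₂ h₃)
  obtain ⟨z, hz, hzy⟩ := hT.exists_degree_eq_one_sameComp hxy.ne
  exact ⟨z, hz, fun h => hyu (hzy.symm.trans h), fun h => hyv (hzy.symm.trans h)⟩

end SimpleGraph

lemma noC3C4_of_forall {G : SimpleGraph V} {p q : V}
    (h : ∀ u v, G.Adj p u → u ≠ q → G.Adj q v → v ≠ p → u ≠ v ∧ ¬ G.Adj u v) :
    noC3C4 G p q := by
  refine ⟨fun z ⟨hpz, hzq⟩ => (h z z hpz hzq.ne hzq.symm hpz.ne').1 rfl, fun u v hpu huv hvq => ?_⟩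
  by_contra! hne
  exact (h u v hpu hne.1 hvq.symm hne.2).2 huv

noncomputable def edgeTestFun (G : SimpleGraph V) (p q : V) (z : V) : ℤ :=
  if z = q ∨ (G.Adj q z ∧ z ≠ p) then 1 else if G.Adj p z then -1 else 0

section Curvature

variable {G : SimpleGraph V} {p q : V}

lemma edgeTestFun_sub_le_dist (hpq : G.Adj p q) (h : noC3C4 G p q)
    {u v : V} (hu : u ∈ insert p (G.neighborSet p) ∪ insert q (G.neighborSet q))
    (hv : v ∈ insert p (G.neighborSet p) ∪ insert q (G.neighborSet q)) :
    edgeTestFun G p q u - edgeTestFun G p q v ≤ (G.dist u v : ℤ) := by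
  have hreach : ∀ u ∈ insert p (G.neighborSet p) ∪ insert q (G.neighborSet q),
      G.Reachable p u := by
    rintro u ((rfl | hu) | (rfl | hu))
    · rfl
    · exact hu.reachable
    · exact hpq.reachable
    · exact hpq.reachable.trans (Adj.reachable hu)
  have huv : G.Reachable u v := (hreach u hu).symm.trans (hreach v hv)
  have hval : ∀ z, edgeTestFun G p q z = 1 ∨ edgeTestFun G p q z = 0 ∨
      edgeTestFun G p q z = -1 := fun z => by
    unfold edgeTestFun; split_ifs <;> simp
  rcases le_or_gt (edgeTestFun G p q u - edgeTestFun G p q v) 0 with h0 | h0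
  · exact h0.trans (Nat.cast_nonneg _)
  have hne : u ≠ v := by rintro rfl; simp at h0
  rcases le_or_gt (edgeTestFun G p q u - edgeTestFun G p q v) 1 with h1 | h1
  · exact h1.trans (by exact_mod_cast huv.pos_dist_of_ne hne)
  obtain ⟨hfu, hfv⟩ : edgeTestFun G p q u = 1 ∧ edgeTestFun G p q v = -1 := by
    rcases hval u with _ | _ | _ <;> rcases hval v with _ | _ | _ <;> omega
  have hu' : u = q ∨ (G.Adj q u ∧ u ≠ p) := by
    unfold edgeTestFun at hfu; split_ifs at hfu with hc <;> first | exact hc | omega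
  have hv' : G.Adj p v ∧ ¬ (v = q ∨ (G.Adj q v ∧ v ≠ p)) := by
    unfold edgeTestFun at hfv; split_ifs at hfv with hc hc'
    exact ⟨hc', hc⟩
  -- a drop of `2` goes from `N[q] \ {p}` to `N(p) \ {q}`, and no 3- or 4-cycle through `pq`
  -- means no edge joins these sets
  have hnadj : ¬ G.Adj u v := by
    rcases hu' with rfl | ⟨hqu, hup⟩
    · exact fun hqv => hv'.2 (.inr ⟨hqv, hv'.1.ne'⟩)
    · intro huv'
      rcases h.2 v u hv'.1 huv'.symm hqu.symm with rfl | rfl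
      · exact hv'.2 (.inl rfl)
      · exact hup rfl
  have := huv.one_lt_dist_of_ne_of_not_adj hne hnadj
  omega

variable [G.LocallyFinite]

lemma abs_lap_le_one {f : V → ℤ} {v : V} (hf : ∀ w ∈ G.neighborSet v, |f w - f v| ≤ 1) :
    |lap G f v| ≤ 1 := by
  rw [lap, abs_div, Nat.abs_cast]
  refine div_le_one_of_le₀ ?_ (Nat.cast_nonneg _)
  calc |∑ w ∈ G.neighborFinset v, ((f w : ℝ) - f v)|
      ≤ ∑ w ∈ G.neighborFinset v, |(f w : ℝ) - f v| := Finset.abs_sum_le_sum_abs _ _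
    _ ≤ ∑ _w ∈ G.neighborFinset v, (1 : ℝ) := Finset.sum_le_sum fun w hw => by
        exact_mod_cast hf w ((G.mem_neighborFinset v w).1 hw)
    _ = G.degree v := by simp

lemma kappaLLY_le_lap_sub {f : V → ℤ}
    (hf : ∀ u ∈ insert p (G.neighborSet p) ∪ insert q (G.neighborSet q),
      ∀ v ∈ insert p (G.neighborSet p) ∪ insert q (G.neighborSet q),
        |f u - f v| ≤ (G.dist u v : ℤ))
    (hfpq : f q - f p = 1) : kappaLLY G p q ≤ lap G f p - lap G f q := by
  refine csInf_le ⟨-2, ?_⟩ ⟨f, hf, hfpq, rfl⟩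
  rintro r ⟨g, hg, -, rfl⟩
  have hlap : ∀ v ∈ ({p, q} : Set V), |lap G g v| ≤ 1 := by
    rintro v hv
    refine abs_lap_le_one fun w hw => ?_
    have hd : ((G.dist w v : ℕ) : ℤ) = 1 := by simp [dist_eq_one_iff_adj.2 (G.adj_symm hw)]
    rw [← hd]
    rcases hv with rfl | rfl
    · exact hg w (.inl (.inr hw)) v (.inl (.inl rfl))
    · exact hg w (.inr (.inr hw)) v (.inr (.inl rfl))
  have hp := abs_le.1 (hlap p (by simp))
  have hq := abs_le.1 (hlap q (by simp))
  linarith [hp.1, hq.2]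

lemma lap_edgeTestFun_left (hpq : G.Adj p q) (h : noC3C4 G p q) :
    lap G (edgeTestFun G p q) p = 2 / G.degree p - 1 := by
  have hq : q ∈ G.neighborFinset p := (G.mem_neighborFinset p q).2 hpq
  have hfp : edgeTestFun G p q p = 0 := by simp [edgeTestFun, hpq.ne]
  have hfq : edgeTestFun G p q q = 1 := by simp [edgeTestFun]
  have hrest : ∀ w ∈ (G.neighborFinset p).erase q,
      ((edgeTestFun G p q w : ℝ) - edgeTestFun G p q p) = -1 := fun w hw => by
    rw [Finset.mem_erase, mem_neighborFinset] at hw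
    have hqw : ¬ G.Adj q w := fun hqw => h.1 w ⟨hw.2, G.adj_symm hqw⟩
    rw [hfp]
    simp [edgeTestFun, hw.1, hw.2, hqw]
  have hdp : (G.degree p : ℝ) ≠ 0 := by
    exact_mod_cast ((G.degree_pos_iff_exists_adj p).2 ⟨q, hpq⟩).ne'
  rw [lap, ← Finset.add_sum_erase _ _ hq, Finset.sum_congr rfl hrest, Finset.sum_const,
    Finset.card_erase_of_mem hq, card_neighborFinset_eq_degree, hfp, hfq, nsmul_eq_mul,
    Nat.cast_sub ((G.degree_pos_iff_exists_adj p).2 ⟨q, hpq⟩)]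
  field_simp
  push_cast
  ring

lemma lap_edgeTestFun_right (hpq : G.Adj p q) :
    lap G (edgeTestFun G p q) q = -1 / G.degree q := by
  have hp : p ∈ G.neighborFinset q := (G.mem_neighborFinset q p).2 hpq.symm
  rw [lap, ← Finset.add_sum_erase _ _ hp, Finset.sum_eq_zero fun w hw => by
    rw [Finset.mem_erase, mem_neighborFinset] at hw
    simp [edgeTestFun, hw.1, hw.2]]
  simp [edgeTestFun, hpq.ne]

lemma kappaLLY_le_of_noC3C4 (hpq : G.Adj p q) (h : noC3C4 G p q) :
    kappaLLY G p q ≤ 1 / G.degree q + 2 / G.degree p - 1 := by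
  calc kappaLLY G p q ≤ lap G (edgeTestFun G p q) p - lap G (edgeTestFun G p q) q :=
        kappaLLY_le_lap_sub (fun u hu v hv => abs_sub_le_iff.2
          ⟨edgeTestFun_sub_le_dist hpq h hu hv,
            G.dist_comm ▸ edgeTestFun_sub_le_dist hpq h hv hu⟩) (by simp [edgeTestFun, hpq.ne])
    _ = 1 / G.degree q + 2 / G.degree p - 1 := by
        rw [lap_edgeTestFun_left hpq h, lap_edgeTestFun_right hpq]
        ring

end Curvature

lemma ZMod.natCast_ne_zero_of_lt {ℓ n : ℕ} (h0 : 0 < n) (h : n < ℓ) : (n : ZMod ℓ) ≠ 0 := by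
  rw [Ne, ZMod.natCast_eq_zero_iff]
  exact fun hd => absurd (Nat.le_of_dvd h0 hd) (by omega)

lemma ZMod.exists_le_natCast_eq {ℓ : ℕ} [NeZero ℓ] {k : ℕ} (hk : (k : ZMod ℓ) = -2)
    {b : ZMod ℓ} (hb : b ≠ -1) : ∃ m ≤ k, (m : ZMod ℓ) = b := by
  refine ⟨b.val, ?_, ZMod.natCast_zmod_val b⟩
  have hk2 : ℓ ≤ k + 2 := by
    refine Nat.le_of_dvd (by omega) ((ZMod.natCast_eq_zero_iff _ _).1 ?_)
    push_cast
    rw [hk]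
    ring
  have hb1 : b.val + 1 ≠ ℓ := fun h => hb <| by
    have : ((b.val + 1 : ℕ) : ZMod ℓ) = 0 := by rw [h, ZMod.natCast_self]
    push_cast at this
    rw [ZMod.natCast_zmod_val] at this
    linear_combination this
  have := ZMod.val_lt b
  omega

/-- The leaves of each component of `T − x` form an arc of the cycle `σ`, as they do when `σ`
lists the leaves in the order of a planar embedding of `T`. -/
def LeavesContiguous (T : SimpleGraph V) (x : V) {ℓ : ℕ} (σ : ZMod ℓ → V) : Prop :=
  ∀ i j : ZMod ℓ, SameComp T x (σ i) (σ j) →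
    (∃ k : ℕ, σ (i + (k : ZMod ℓ)) = σ j ∧
      ∀ m : ℕ, m ≤ k → SameComp T x (σ i) (σ (i + (m : ZMod ℓ)))) ∨
    (∃ k : ℕ, σ (j + (k : ZMod ℓ)) = σ i ∧
      ∀ m : ℕ, m ≤ k → SameComp T x (σ j) (σ (j + (m : ZMod ℓ))))

def compLeaves (T : SimpleGraph V) (x : V) {ℓ : ℕ} (σ : ZMod ℓ → V) (a : ZMod ℓ) :
    Set (ZMod ℓ) :=
  {k | SameComp T x (σ k) (σ a)}

section Halin

variable {T : SimpleGraph V} {x : V} {ℓ : ℕ} {σ : ZMod ℓ → V}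

lemma compLeaves_eq_of_sameComp {a b : ZMod ℓ} (h : SameComp T x (σ a) (σ b)) :
    compLeaves T x σ a = compLeaves T x σ b :=
  Set.ext fun _ => ⟨fun hk => hk.trans h, fun hk => hk.trans h.symm⟩

lemma one_le_ncard_compLeaves [NeZero ℓ] (hx : ∀ k, x ≠ σ k) (a : ZMod ℓ) :
    1 ≤ (compLeaves T x σ a).ncard :=
  (Set.ncard_pos (Set.toFinite _)).2 ⟨a, SameComp.refl (hx a)⟩

lemma ncard_compLeaves_le_one_of_forall {a : ZMod ℓ}
    (h : ∀ k, SameComp T x (σ k) (σ a) → k = a) : (compLeaves T x σ a).ncard ≤ 1 :=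
  (Set.ncard_le_ncard h (Set.finite_singleton a)).trans (Set.ncard_singleton a).le

lemma ncard_compLeaves_le_one_of_adj [Fintype V] (hinj : Function.Injective σ) {a : ZMod ℓ}
    (ha : T.degree (σ a) = 1) (hax : T.Adj (σ a) x) : (compLeaves T x σ a).ncard ≤ 1 :=
  ncard_compLeaves_le_one_of_forall fun _ hk =>
    hinj (SameComp.eq_of_adj_of_degree_eq_one ha hax hk.symm)

lemma LeavesContiguous.ncard_compLeaves_le_one [NeZero ℓ] (contig : LeavesContiguous T x σ)
    (hinj : Function.Injective σ) (h2 : (2 : ZMod ℓ) ≠ 0) {a : ZMod ℓ}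
    (hsc : SameComp T x (σ a) (σ (a + 2))) (hsep : ¬ SameComp T x (σ (a + 1)) (σ a)) :
    (compLeaves T x σ (a + 1)).ncard ≤ 1 := by
  refine ncard_compLeaves_le_one_of_forall fun b hb => by_contra fun hba => hsep ?_
  rcases contig a (a + 2) hsc with ⟨k, hk, hall⟩ | ⟨k, hk, hall⟩
  · have hk2 : (k : ZMod ℓ) = 2 := by linear_combination hinj hk
    have hk1 : 1 ≤ k := Nat.one_le_iff_ne_zero.2 fun hk0 => h2 (by simp [← hk2, hk0])
    simpa using (hall 1 hk1).symm
  · -- the arc from `a + 2` forward to `a` covers every position but `a + 1`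
    have hk2 : (k : ZMod ℓ) = -2 := by linear_combination hinj hk
    obtain ⟨m, hmk, hm⟩ := ZMod.exists_le_natCast_eq hk2 (b := b - (a + 2))
      fun h => hba (by linear_combination h)
    have hb' : SameComp T x (σ (a + 2)) (σ b) := by simpa [hm] using hall m hmk
    exact hb.symm.trans (hb'.symm.trans hsc.symm)

lemma halinGraph_adj {u v : V} :
    (halinGraph T σ).Adj u v ↔ T.Adj u v ∨ (u ≠ v ∧
      ((∃ m, u = σ m ∧ v = σ (m + 1)) ∨ (∃ m, v = σ m ∧ u = σ (m + 1)))) := by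
  simp [halinGraph, fromRel_adj]

lemma adj_of_halinGraph_adj_of_notMem_range {u v : V} (h : (halinGraph T σ).Adj u v)
    (hu : u ∉ Set.range σ) : T.Adj u v := by
  rcases halinGraph_adj.1 h with h | ⟨-, ⟨m, rfl, -⟩ | ⟨m, -, rfl⟩⟩
  · exact h
  all_goals exact absurd ⟨_, rfl⟩ hu

lemma halinGraph_adj_succ (hinj : Function.Injective σ) (h1 : (1 : ZMod ℓ) ≠ 0) (k : ZMod ℓ) :
    (halinGraph T σ).Adj (σ k) (σ (k + 1)) :=
  halinGraph_adj.2 (.inr ⟨fun h => h1 (by linear_combination -hinj h), .inl ⟨k, rfl, rfl⟩⟩)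

lemma halinGraph_adj_iff_of_degree_eq_one [Fintype V] (hinj : Function.Injective σ)
    (h1 : (1 : ZMod ℓ) ≠ 0) {k : ZMod ℓ} {t : V} (hk : T.degree (σ k) = 1) (ht : T.Adj (σ k) t)
    (v : V) : (halinGraph T σ).Adj (σ k) v ↔ v = t ∨ v = σ (k + 1) ∨ v = σ (k - 1) := by
  constructor
  · intro h
    rcases halinGraph_adj.1 h with h | ⟨-, ⟨m, hm, rfl⟩ | ⟨m, rfl, hm⟩⟩
    · obtain ⟨z, -, hz⟩ := degree_eq_one_iff_existsUnique_adj.mp hk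
      exact .inl ((hz v h).trans (hz t ht).symm)
    · rw [hinj hm]
      exact .inr (.inl rfl)
    · rw [hinj hm, add_sub_cancel_right]
      exact .inr (.inr rfl)
  · rintro (rfl | rfl | rfl)
    · exact halinGraph_adj.2 (.inl ht)
    · exact halinGraph_adj_succ hinj h1 k
    · simpa using (halinGraph_adj_succ (T := T) hinj h1 (k - 1)).symm

lemma three_le_degree_halinGraph [Fintype V] (hinj : Function.Injective σ)
    (h2 : (2 : ZMod ℓ) ≠ 0) {k : ZMod ℓ} {t : V} (hk : T.degree (σ k) = 1) (ht : T.Adj (σ k) t)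
    (htσ : t ∉ Set.range σ) : 3 ≤ (halinGraph T σ).degree (σ k) := by
  have h1 : (1 : ZMod ℓ) ≠ 0 := fun h => h2 (by linear_combination 2 * h)
  have hsub : {t, σ (k + 1), σ (k - 1)} ⊆ (halinGraph T σ).neighborFinset (σ k) := fun v hv => by
    rw [mem_neighborFinset, halinGraph_adj_iff_of_degree_eq_one hinj h1 hk ht]
    simpa using hv
  have hcard : ({t, σ (k + 1), σ (k - 1)} : Finset V).card = 3 := by
    refine Finset.card_eq_three.2 ⟨_, _, _, fun h => htσ ⟨_, h.symm⟩, fun h => htσ ⟨_, h.symm⟩,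
      fun h => h2 ?_, rfl⟩
    linear_combination hinj h
  rw [← card_neighborFinset_eq_degree, ← hcard]
  exact Finset.card_le_card hsub

lemma five_le_of_two_le_ncard_compLeaves [Fintype V] [NeZero ℓ] (hT : T.IsTree)
    (hleaf : ∀ v : V, v ∈ Set.range σ ↔ T.degree v = 1) (hx : 3 ≤ T.degree x) {a b : ZMod ℓ}
    (hab : ¬ SameComp T x (σ a) (σ b)) (ha : 2 ≤ (compLeaves T x σ a).ncard)
    (hb : 2 ≤ (compLeaves T x σ b).ncard) : 5 ≤ ℓ := by
  obtain ⟨z, hz, hza, hzb⟩ := hT.exists_degree_eq_one_not_sameComp hx (σ a) (σ b)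
  obtain ⟨c, rfl⟩ := (hleaf z).2 hz
  have hdisj : Disjoint (compLeaves T x σ a) (compLeaves T x σ b) :=
    Set.disjoint_left.2 fun k hka hkb => hab (hka.symm.trans hkb)
  have hc : c ∉ compLeaves T x σ a ∪ compLeaves T x σ b := by
    rintro (h | h) <;> contradiction
  have := Set.ncard_le_ncard (Set.subset_univ (insert c (compLeaves T x σ a ∪ compLeaves T x σ b)))
  rw [Set.ncard_insert_of_notMem hc, Set.ncard_union_eq hdisj, Set.ncard_univ,
    Nat.card_zmod] at this
  omega

lemma noC3C4_halinGraph [Fintype V] (hT : T.IsTree) (hinj : Function.Injective σ)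
    (hdeg : ∀ k, T.degree (σ k) = 1) (hx : 3 ≤ T.degree x) (hℓ : 5 ≤ ℓ) {a : ZMod ℓ}
    {tp tq : V} (htp : T.Adj (σ a) tp) (htq : T.Adj (σ (a + 1)) tq)
    (htpx : x ≠ tp) (htqx : x ≠ tq) (htpσ : tp ∉ Set.range σ) (htqσ : tq ∉ Set.range σ)
    (hsep : ¬ SameComp T x (σ (a + 1)) (σ a))
    (hsep_succ : ¬ SameComp T x (σ a) (σ (a + 2)))
    (hsep_pred : ¬ SameComp T x (σ (a - 1)) (σ (a + 1))) :
    noC3C4 (halinGraph T σ) (σ a) (σ (a + 1)) := by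
  have hxσ : ∀ k, x ≠ σ k := fun k h => by have := hdeg k; rw [← h] at this; omega
  have hne : ∀ n : ℕ, 0 < n → n < 5 → (n : ZMod ℓ) ≠ 0 := fun n h0 h5 =>
    ZMod.natCast_ne_zero_of_lt h0 (by omega)
  have hp := halinGraph_adj_iff_of_degree_eq_one hinj (by exact_mod_cast hne 1 one_pos (by omega))
    (hdeg a) htp
  have hq := halinGraph_adj_iff_of_degree_eq_one hinj (by exact_mod_cast hne 1 one_pos (by omega))
    (hdeg (a + 1)) htq
  rw [add_assoc, one_add_one_eq_two, add_sub_cancel_right] at hq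
  have hapart : ∀ u v, ¬ SameComp T x u v → x ≠ u → x ≠ v → u ∉ Set.range σ ∨ v ∉ Set.range σ →
      u ≠ v ∧ ¬ (halinGraph T σ).Adj u v := by
    intro u v huv hu hv hσ
    refine ⟨fun h => huv (h ▸ SameComp.refl hu), fun hadj => huv (SameComp.of_adj ?_ hu hv)⟩
    rcases hσ with hσ | hσ
    · exact adj_of_halinGraph_adj_of_notMem_range hadj hσ
    · exact (adj_of_halinGraph_adj_of_notMem_range hadj.symm hσ).symm
  have hA : SameComp T x (σ a) tp := .of_adj htp (hxσ a) htpx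
  have hB : SameComp T x (σ (a + 1)) tq := .of_adj htq (hxσ _) htqx
  refine noC3C4_of_forall fun u v hu huq hv hvp => ?_
  rcases (hp u).1 hu with rfl | rfl | rfl <;> rcases (hq v).1 hv with rfl | rfl | rfl
  all_goals first | exact absurd rfl huq | exact absurd rfl hvp | skip
  · exact hapart _ _ (fun h => hsep (hB.trans (h.symm.trans hA.symm))) htpx htqx (.inl htpσ)
  · exact hapart _ _ (fun h => hsep_succ (hA.trans h)) htpx (hxσ _) (.inl htpσ)
  · exact hapart _ _ (fun h => hsep_pred (h.trans hB.symm)) (hxσ _) htqx (.inr htqσ)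
  · refine ⟨fun h => hne 3 (by omega) (by omega) (by push_cast; linear_combination -hinj h),
      fun hadj => ?_⟩
    rcases halinGraph_adj.1 hadj with h | ⟨-, ⟨m, hm, hm'⟩ | ⟨m, hm, hm'⟩⟩
    · exact hT.connected.not_adj_of_degree_eq_one (hdeg _) (hdeg _) hx h
    · exact hne 2 (by omega) (by omega) (by push_cast; linear_combination hinj hm' - hinj hm)
    · exact hne 4 (by omega) (by omega) (by push_cast; linear_combination hinj hm - hinj hm')

lemma kappaLLY_halinGraph_nonpos [Fintype V] (hT : T.IsTree) (hℓ : 3 ≤ ℓ)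
    (hinj : Function.Injective σ) (hleaf : ∀ v : V, v ∈ Set.range σ ↔ T.degree v = 1)
    (hx : 3 ≤ T.degree x) (contig : LeavesContiguous T x σ) {a : ZMod ℓ}
    (hsep : ¬ SameComp T x (σ (a + 1)) (σ a)) (ha : 2 ≤ (compLeaves T x σ a).ncard)
    (hb : 2 ≤ (compLeaves T x σ (a + 1)).ncard) :
    kappaLLY (halinGraph T σ) (σ a) (σ (a + 1)) ≤ 0 := by
  have : NeZero ℓ := ⟨by omega⟩
  have hℓ5 := five_le_of_two_le_ncard_compLeaves hT hleaf hx (fun h => hsep h.symm) ha hb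
  have h1 : (1 : ZMod ℓ) ≠ 0 := by exact_mod_cast ZMod.natCast_ne_zero_of_lt one_pos (by omega)
  have h2 : (2 : ZMod ℓ) ≠ 0 := by exact_mod_cast ZMod.natCast_ne_zero_of_lt two_pos (by omega)
  have hdeg : ∀ k, T.degree (σ k) = 1 := fun k => (hleaf _).1 ⟨k, rfl⟩
  obtain ⟨tp, htp⟩ := (T.degree_pos_iff_exists_adj (σ a)).1 (by rw [hdeg]; omega)
  obtain ⟨tq, htq⟩ := (T.degree_pos_iff_exists_adj (σ (a + 1))).1 (by rw [hdeg]; omega)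
  have htpx : x ≠ tp := by
    rintro rfl
    have := ncard_compLeaves_le_one_of_adj hinj (hdeg a) htp
    omega
  have htqx : x ≠ tq := by
    rintro rfl
    have := ncard_compLeaves_le_one_of_adj hinj (hdeg (a + 1)) htq
    omega
  have hsep_succ : ¬ SameComp T x (σ a) (σ (a + 2)) := fun h => by
    have := contig.ncard_compLeaves_le_one hinj h2 h hsep
    omega
  have hsep_pred : ¬ SameComp T x (σ (a - 1)) (σ (a + 1)) := fun h => by
    have := contig.ncard_compLeaves_le_one hinj h2 (a := a - 1)
      (by rwa [show a - 1 + 2 = a + 1 by ring])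
      (by rw [sub_add_cancel]; exact fun h' => hsep (h.symm.trans h'.symm))
    rw [sub_add_cancel] at this
    omega
  have hσ : ∀ {k : ZMod ℓ} {t : V}, T.Adj (σ k) t → t ∉ Set.range σ := fun ht ⟨_, hk⟩ =>
    hT.connected.not_adj_of_degree_eq_one (hdeg _) (hdeg _) hx (hk ▸ ht)
  have hdp := three_le_degree_halinGraph hinj h2 (hdeg a) htp (hσ htp)
  have hdq := three_le_degree_halinGraph hinj h2 (hdeg (a + 1)) htq (hσ htq)
  calc kappaLLY (halinGraph T σ) (σ a) (σ (a + 1))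
      ≤ 1 / (halinGraph T σ).degree (σ (a + 1)) + 2 / (halinGraph T σ).degree (σ a) - 1 :=
        kappaLLY_le_of_noC3C4 (halinGraph_adj_succ hinj h1 a) <| noC3C4_halinGraph hT hinj hdeg
          hx hℓ5 htp htq htpx htqx (hσ htp) (hσ htq) hsep hsep_succ hsep_pred
    _ ≤ 1 / 3 + 2 / 3 - 1 := by gcongr <;> exact_mod_cast ‹_›
    _ = 0 := by norm_num

end Halin

theorem stmt12_general {V : Type*} [Fintype V] (T : SimpleGraph V) (hT : T.IsTree)
    (ℓ : ℕ) (hℓ : 3 ≤ ℓ) (σ : ZMod ℓ → V) (hinj : Function.Injective σ)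
    (hleaf : ∀ v : V, v ∈ Set.range σ ↔ T.degree v = 1)
    (x : V) (hx : 3 ≤ T.degree x)
    (hpos : ∀ u v : V, (halinGraph T σ).Adj u v →
      0 < kappaLLY (halinGraph T σ) u v)
    (contig : ∀ i j : ZMod ℓ, SameComp T x (σ i) (σ j) →
      (∃ k : ℕ, σ (i + (k : ZMod ℓ)) = σ j ∧
        ∀ m : ℕ, m ≤ k → SameComp T x (σ i) (σ (i + (m : ZMod ℓ)))) ∨
      (∃ k : ℕ, σ (j + (k : ZMod ℓ)) = σ i ∧
        ∀ m : ℕ, m ≤ k → SameComp T x (σ j) (σ (j + (m : ZMod ℓ)))))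
    (i : ZMod ℓ)
    (h2 : 2 ≤ {j : ZMod ℓ | SameComp T x (σ j) (σ i)}.ncard) :
    ∀ j : ZMod ℓ, SameComp T x (σ j) (σ i) →
      (¬ SameComp T x (σ (j + 1)) (σ i) →
        {k : ZMod ℓ | SameComp T x (σ k) (σ (j + 1))}.ncard = 1) ∧
      (¬ SameComp T x (σ (j - 1)) (σ i) →
        {k : ZMod ℓ | SameComp T x (σ k) (σ (j - 1))}.ncard = 1) := by
  have : NeZero ℓ := ⟨by omega⟩
  have hxσ : ∀ k, x ≠ σ k := fun k h => by
    have := (hleaf (σ k)).1 ⟨k, rfl⟩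
    rw [← h] at this
    omega
  have h1 : (1 : ZMod ℓ) ≠ 0 := by exact_mod_cast ZMod.natCast_ne_zero_of_lt one_pos (by omega)
  have hcurv : ∀ a, ¬ SameComp T x (σ (a + 1)) (σ a) → 2 ≤ (compLeaves T x σ a).ncard →
      2 ≤ (compLeaves T x σ (a + 1)).ncard → False := fun a hsep ha hb =>
    (hpos _ _ (halinGraph_adj_succ hinj h1 a)).not_ge
      (kappaLLY_halinGraph_nonpos hT hℓ hinj hleaf hx contig hsep ha hb)
  have hone : ∀ b, ¬ 2 ≤ (compLeaves T x σ b).ncard → (compLeaves T x σ b).ncard = 1 :=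
    fun b hb => le_antisymm (by omega) (one_le_ncard_compLeaves hxσ b)
  intro j hj
  have hAj : 2 ≤ (compLeaves T x σ j).ncard := by rwa [compLeaves_eq_of_sameComp hj]
  refine ⟨fun hn => hone _ (hcurv j (fun h => hn (h.trans hj)) hAj), fun hn => hone _ fun hB => ?_⟩
  refine hcurv (j - 1) ?_ hB (by rwa [sub_add_cancel])
  rw [sub_add_cancel]
  exact fun h => hn (h.symm.trans hj)

theorem stmt12 {V : Type*} [Fintype V] (T : SimpleGraph V) (hT : T.IsTree)
    (ℓ : ℕ) (hℓ : 3 ≤ ℓ) (σ : ZMod ℓ → V) (hinj : Function.Injective σ)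
    (hleaf : ∀ v : V, v ∈ Set.range σ ↔ T.degree v = 1)
    (x : V) (hmax : ∀ v : V, T.degree v ≤ T.degree x) (hx : 3 ≤ T.degree x)
    (hpos : ∀ u v : V, (halinGraph T σ).Adj u v →
      0 < kappaLLY (halinGraph T σ) u v)
    (contig : ∀ i j : ZMod ℓ, SameComp T x (σ i) (σ j) →
      (∃ k : ℕ, σ (i + (k : ZMod ℓ)) = σ j ∧
        ∀ m : ℕ, m ≤ k → SameComp T x (σ i) (σ (i + (m : ZMod ℓ)))) ∨
      (∃ k : ℕ, σ (j + (k : ZMod ℓ)) = σ i ∧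
        ∀ m : ℕ, m ≤ k → SameComp T x (σ j) (σ (j + (m : ZMod ℓ)))))
    (i : ZMod ℓ)
    (h2 : 2 ≤ {j : ZMod ℓ | SameComp T x (σ j) (σ i)}.ncard) :
    ∀ j : ZMod ℓ, SameComp T x (σ j) (σ i) →
      (¬ SameComp T x (σ (j + 1)) (σ i) →
        {k : ZMod ℓ | SameComp T x (σ k) (σ (j + 1))}.ncard = 1) ∧
      (¬ SameComp T x (σ (j - 1)) (σ i) →
        {k : ZMod ℓ | SameComp T x (σ k) (σ (j - 1))}.ncard = 1) :=
  stmt12_general T hT ℓ hℓ σ hinj hleaf x hx hpos contig i h2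
end

section
/- Let G = H(T,C) be a generalized Halin graph with positive Lin-Lu-Yau curvature on every edge, x a maximum-degree vertex of T. Then for any two adjacent vertices p, q on the cycle C lying in different components of T − x, one has d_T(x,p) + d_T(x,q) ≤ 4, where d_T is the tree distance. -/
open SimpleGraph

attribute [local instance] Classical.propDecidable

variable {V : Type*}

/-! ### Auxiliary lemmas -/

private lemma aux_sInf_le_zero {S : Set ℝ} (h0 : (0 : ℝ) ∈ S) : sInf S ≤ 0 := by
  by_cases hb : BddBelow S
  · exact csInf_le hb h0
  · rw [Real.sInf_of_not_bddBelow hb]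

private lemma aux_adj_dist_le_one {G : SimpleGraph V} {u v : V} (h : G.Adj u v) :
    G.dist u v ≤ 1 := by
  simpa using SimpleGraph.dist_le (SimpleGraph.Walk.cons h SimpleGraph.Walk.nil)

private lemma aux_two_le_dist {G : SimpleGraph V} (hc : G.Connected) {u v : V}
    (hne : u ≠ v) (hna : ¬ G.Adj u v) : 2 ≤ G.dist u v := by
  by_contra hlt
  push_neg at hlt
  have hpos := hc.pos_dist_of_ne hne
  have h1 : G.dist u v = 1 := by omega
  obtain ⟨w, hw⟩ := hc.exists_walk_length_eq_dist u v
  rw [h1] at hw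
  cases w with
  | nil => simp at hw
  | cons h' w' =>
    have h0 : w'.length = 0 := by
      simp only [SimpleGraph.Walk.length_cons] at hw; omega
    have heq := w'.eq_of_length_eq_zero h0
    rw [heq] at h'
    exact hna h'

private lemma aux_three_le_dist {G : SimpleGraph V} (hc : G.Connected) {u v : V}
    (hne : u ≠ v) (hna : ¬ G.Adj u v)
    (h2 : ∀ z, G.Adj u z → G.Adj z v → False) : 3 ≤ G.dist u v := by
  by_contra hlt
  push_neg at hlt
  have hge := aux_two_le_dist hc hne hna
  have h1 : G.dist u v = 2 := by omega
  obtain ⟨w, hw⟩ := hc.exists_walk_length_eq_dist u v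
  rw [h1] at hw
  cases w with
  | nil => simp at hw
  | cons h' w' =>
    cases w' with
    | nil => simp at hw
    | cons h'' w'' =>
      have h0 : w''.length = 0 := by
        simp only [SimpleGraph.Walk.length_cons] at hw; omega
      have heq := w''.eq_of_length_eq_zero h0
      rw [heq] at h''
      exact h2 _ h' h''

private lemma aux_tree_no_triangle {T : SimpleGraph V} (hT : T.IsTree) {b c d : V}
    (h1 : T.Adj b c) (h2 : T.Adj c d) (h3 : T.Adj d b) : False := by
  have hp1 : (SimpleGraph.Walk.cons h1 (SimpleGraph.Walk.cons h2 SimpleGraph.Walk.nil)).IsPath := by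
    rw [SimpleGraph.Walk.isPath_def]
    simp [h1.ne, h2.ne, h3.ne']
  have hp2 : (SimpleGraph.Walk.cons h3.symm SimpleGraph.Walk.nil).IsPath := by
    rw [SimpleGraph.Walk.isPath_def]
    simp [h3.ne']
  have huniq := hT.IsAcyclic.path_unique ⟨_, hp1⟩ ⟨_, hp2⟩
  have hlen := congrArg (fun pp : T.Path b d => pp.val.length) huniq
  simp at hlen

private lemma aux_tree_no_square {T : SimpleGraph V} (hT : T.IsTree) {b c d e : V}
    (h1 : T.Adj b c) (h2 : T.Adj c d) (h3 : T.Adj d e) (h4 : T.Adj e b) :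
    b = d ∨ c = e := by
  by_contra hcon
  push_neg at hcon
  obtain ⟨hbd, hce⟩ := hcon
  have hp1 : (SimpleGraph.Walk.cons h1 (SimpleGraph.Walk.cons h2 SimpleGraph.Walk.nil)).IsPath := by
    rw [SimpleGraph.Walk.isPath_def]
    simp [h1.ne, h2.ne, hbd]
  have hp2 : (SimpleGraph.Walk.cons h4.symm (SimpleGraph.Walk.cons h3.symm SimpleGraph.Walk.nil)).IsPath := by
    rw [SimpleGraph.Walk.isPath_def]
    simp [h4.ne', h3.ne', hbd]
  have huniq := hT.IsAcyclic.path_unique ⟨_, hp1⟩ ⟨_, hp2⟩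
  have hsup := congrArg (fun pp : T.Path b d => pp.val.support) huniq
  simp only [SimpleGraph.Walk.support_cons, SimpleGraph.Walk.support_nil] at hsup
  simp only [List.cons.injEq, and_true, true_and] at hsup
  exact hce hsup

/-- In the Halin graph, a vertex of tree-degree ≠ 1 (an internal vertex of the
tree) has no cycle edges, so its Halin adjacency coincides with tree adjacency. -/
private lemma aux_internal_adj [Fintype V] {T : SimpleGraph V} {ℓ : ℕ} {σ : ZMod ℓ → V}
    (hleaf : ∀ v : V, v ∈ Set.range σ ↔ T.degree v = 1)
    {u : V} (hdeg : T.degree u ≠ 1) (z : V) :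
    (halinGraph T σ).Adj u z ↔ T.Adj u z := by
  constructor
  · intro h
    rcases (SimpleGraph.sup_adj _ _ _ _).mp h with h' | h'
    · exact h'
    · rcases (SimpleGraph.fromRel_adj _ _ _).mp h' with ⟨hne, h'' | h''⟩
      · obtain ⟨j, hj1, hj2⟩ := h''
        exact absurd ((hleaf u).mp ⟨j, hj1.symm⟩) hdeg
      · obtain ⟨j, hj1, hj2⟩ := h''
        exact absurd ((hleaf u).mp ⟨j + 1, hj2.symm⟩) hdeg
  · intro h
    exact (SimpleGraph.sup_adj _ _ _ _).mpr (Or.inl h)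


theorem stmt13 {V : Type*} [Fintype V] (T : SimpleGraph V) (hT : T.IsTree)
    (ℓ : ℕ) (hℓ : 3 ≤ ℓ) (σ : ZMod ℓ → V) (hinj : Function.Injective σ)
    (hleaf : ∀ v : V, v ∈ Set.range σ ↔ T.degree v = 1)
    (x : V) (hmax : ∀ v : V, T.degree v ≤ T.degree x) (hx : 3 ≤ T.degree x)
    (hpos : ∀ u v : V, (halinGraph T σ).Adj u v →
      0 < kappaLLY (halinGraph T σ) u v)
    (i : ZMod ℓ) (hdiff : ¬ SameComp T x (σ i) (σ (i + 1))) :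
    T.dist x (σ i) + T.dist x (σ (i + 1)) ≤ 4 := by
  by_contra hcon
  push_neg at hcon
  set p := σ i with hp
  set q := σ (i + 1) with hq
  have hconn : T.Connected := hT.isConnected
  -- a geodesic from p to q, which must pass through x
  obtain ⟨W, hWlen⟩ := hconn.exists_walk_length_eq_dist p q
  have hxW : x ∈ W.support := by
    by_contra hx'
    exact hdiff ⟨W, hx'⟩
  set N := W.length with hN
  -- the distance sum is at most N
  have hsum : T.dist p x + T.dist x q ≤ N := by
    have hspec := congrArg SimpleGraph.Walk.length (W.take_spec hxW)
    rw [SimpleGraph.Walk.length_append] at hspec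
    have h1 := SimpleGraph.dist_le (W.takeUntil x hxW)
    have h2 := SimpleGraph.dist_le (W.dropUntil x hxW)
    omega
  have hN5 : 5 ≤ N := by
    have hcomm : T.dist x p = T.dist p x := SimpleGraph.dist_comm ..
    omega
  -- extract the vertex sequence of the geodesic
  obtain ⟨a, ha0, haN, hadj⟩ :
      ∃ a : ℕ → V, a 0 = p ∧ a N = q ∧ ∀ t, t < N → T.Adj (a t) (a (t + 1)) :=
    ⟨W.getVert, W.getVert_zero, W.getVert_length, fun t ht => W.adj_getVert_succ ht⟩
  have hdistpq : T.dist p q = N := hWlen.symm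
  -- distances along a geodesic are exact
  have hle : ∀ s d : ℕ, s + d ≤ N → T.dist (a s) (a (s + d)) ≤ d := by
    intro s d
    induction d with
    | zero => intro _; simp
    | succ n ih =>
      intro hsd
      show T.dist (a s) (a (s + n + 1)) ≤ n + 1
      have h1 : T.dist (a s) (a (s + n)) ≤ n := ih (by omega)
      have h2 : T.Adj (a (s + n)) (a (s + n + 1)) := hadj _ (by omega)
      have h3 : T.dist (a (s + n)) (a (s + n + 1)) ≤ 1 := aux_adj_dist_le_one h2
      have h4 : T.dist (a s) (a (s + n + 1)) ≤
          T.dist (a s) (a (s + n)) + T.dist (a (s + n)) (a (s + n + 1)) :=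
        hconn.dist_triangle
      omega
  have hexact : ∀ s t : ℕ, s ≤ t → t ≤ N → T.dist (a s) (a t) = t - s := by
    intro s t hst htN
    have hub : T.dist (a s) (a t) ≤ t - s := by
      have := hle s (t - s) (by omega)
      rwa [show s + (t - s) = t by omega] at this
    have hps : T.dist (a 0) (a s) ≤ s := by
      have := hle 0 s (by omega)
      simpa using this
    have htq : T.dist (a t) (a N) ≤ N - t := by
      have := hle t (N - t) (by omega)
      rwa [show t + (N - t) = N by omega] at this
    have htr1 : T.dist (a 0) (a N) ≤ T.dist (a 0) (a s) + T.dist (a s) (a N) :=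
      hconn.dist_triangle
    have htr2 : T.dist (a s) (a N) ≤ T.dist (a s) (a t) + T.dist (a t) (a N) :=
      hconn.dist_triangle
    have h0N : T.dist (a 0) (a N) = N := by rw [ha0, haN]; exact hdistpq
    omega
  -- basic adjacency and distance facts between a 1, a 2, a 3, a 4
  have adj12 : T.Adj (a 1) (a 2) := hadj 1 (by omega)
  have adj23 : T.Adj (a 2) (a 3) := hadj 2 (by omega)
  have adj34 : T.Adj (a 3) (a 4) := hadj 3 (by omega)
  have hne : ∀ s t : ℕ, s < t → t ≤ N → a s ≠ a t := by
    intro s t hst htN heq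
    have := hexact s t (by omega) htN
    rw [heq, SimpleGraph.dist_self] at this
    omega
  have d13 : T.dist (a 1) (a 3) = 2 := hexact 1 3 (by omega) (by omega)
  have d14 : T.dist (a 1) (a 4) = 3 := hexact 1 4 (by omega) (by omega)
  have d24 : T.dist (a 2) (a 4) = 2 := hexact 2 4 (by omega) (by omega)
  have tna13 : ¬ T.Adj (a 1) (a 3) := fun h => by
    have := aux_adj_dist_le_one h; omega
  have tna14 : ¬ T.Adj (a 1) (a 4) := fun h => by
    have := aux_adj_dist_le_one h; omega
  have tna24 : ¬ T.Adj (a 2) (a 4) := fun h => by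
    have := aux_adj_dist_le_one h; omega
  -- internality: a 1, a 2, a 3, a 4 are not leaves
  have hint : ∀ t : ℕ, 1 ≤ t → t ≤ 4 → T.degree (a t) ≠ 1 := by
    intro t h1t ht4
    have hprev : T.Adj (a t) (a (t - 1)) := by
      have := hadj (t - 1) (by omega)
      rw [show t - 1 + 1 = t by omega] at this
      exact this.symm
    have hnext : T.Adj (a t) (a (t + 1)) := hadj t (by omega)
    have hneq : a (t - 1) ≠ a (t + 1) := hne (t - 1) (t + 1) (by omega) (by omega)
    have hcard : 1 < (T.neighborFinset (a t)).card :=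
      Finset.one_lt_card.mpr
        ⟨a (t - 1), (T.mem_neighborFinset _ _).mpr hprev,
         a (t + 1), (T.mem_neighborFinset _ _).mpr hnext, hneq⟩
    rw [← SimpleGraph.card_neighborFinset_eq_degree]
    omega
  set G := halinGraph T σ with hG
  have hGadj : ∀ t : ℕ, 1 ≤ t → t ≤ 4 → ∀ z, G.Adj (a t) z ↔ T.Adj (a t) z :=
    fun t h1 h4 z => aux_internal_adj hleaf (hint t h1 h4) z
  have hGconn : G.Connected := hconn.mono le_sup_left
  have hTG : ∀ {u v : V}, T.Adj u v → G.Adj u v :=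
    fun h => (SimpleGraph.sup_adj _ _ _ _).mpr (Or.inl h)
  -- the certificate function
  set f : V → ℤ := fun z =>
    if z = a 1 then -1 else if z = a 2 then 0 else if z = a 4 then 2
    else if z = a 3 ∨ T.Adj (a 3) z then 1 else 0 with hf
  have f1 : f (a 1) = -1 := by simp [hf]
  have f2 : f (a 2) = 0 := by
    have h1 : ¬ (a 2 = a 1) := (hne 1 2 (by omega) (by omega)).symm
    simp [hf, h1]
  have f3 : f (a 3) = 1 := by
    have h1 : ¬ (a 3 = a 1) := (hne 1 3 (by omega) (by omega)).symm
    have h2 : ¬ (a 3 = a 2) := (hne 2 3 (by omega) (by omega)).symm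
    have h4 : ¬ (a 3 = a 4) := hne 3 4 (by omega) (by omega)
    simp [hf, h1, h2, h4]
  have f4 : f (a 4) = 2 := by
    have h1 : ¬ (a 4 = a 1) := (hne 1 4 (by omega) (by omega)).symm
    have h2 : ¬ (a 4 = a 2) := (hne 2 4 (by omega) (by omega)).symm
    simp [hf, h1, h2]
  have fC2 : ∀ z, T.Adj (a 2) z → z ≠ a 1 → z ≠ a 3 → f z = 0 := by
    intro z hz hz1 hz3
    have hz2 : z ≠ a 2 := hz.ne'
    have hz4 : z ≠ a 4 := by
      intro h; rw [h] at hz; exact tna24 hz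
    have hz3' : ¬ T.Adj (a 3) z := by
      intro h3z
      exact aux_tree_no_triangle hT adj23 h3z hz.symm
    simp [hf, hz1, hz2, hz3, hz4, hz3']
  have fC3 : ∀ z, T.Adj (a 3) z → z ≠ a 2 → z ≠ a 4 → f z = 1 := by
    intro z hz hz2 hz4
    have hz1 : z ≠ a 1 := by
      intro h; rw [h] at hz; exact tna13 hz.symm
    simp [hf, hz1, hz2, hz4, hz]
  -- Laplacian computations
  have hnbr2 : ∀ w, w ∈ G.neighborFinset (a 2) ↔ T.Adj (a 2) w := by
    intro w
    rw [SimpleGraph.mem_neighborFinset]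
    exact hGadj 2 (by omega) (by omega) w
  have hnbr3 : ∀ w, w ∈ G.neighborFinset (a 3) ↔ T.Adj (a 3) w := by
    intro w
    rw [SimpleGraph.mem_neighborFinset]
    exact hGadj 3 (by omega) (by omega) w
  have hlap2 : lap G f (a 2) = 0 := by
    have hsubset : ({a 1, a 3} : Finset V) ⊆ G.neighborFinset (a 2) := by
      intro w hw
      rcases Finset.mem_insert.mp hw with h | h
      · rw [h, hnbr2]; exact adj12.symm
      · rw [Finset.mem_singleton.mp h, hnbr2]; exact adj23
    have hsum : (∑ w ∈ G.neighborFinset (a 2), ((f w : ℝ) - (f (a 2) : ℝ))) = 0 := by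
      rw [← Finset.sum_sdiff hsubset]
      have hz : (∑ w ∈ G.neighborFinset (a 2) \ {a 1, a 3},
          ((f w : ℝ) - (f (a 2) : ℝ))) = 0 := by
        apply Finset.sum_eq_zero
        intro w hw
        obtain ⟨hwmem, hwnot⟩ := Finset.mem_sdiff.mp hw
        have hwadj := (hnbr2 w).mp hwmem
        have hw1 : w ≠ a 1 := fun h => hwnot (by simp [h])
        have hw3 : w ≠ a 3 := fun h => hwnot (by simp [h])
        rw [fC2 w hwadj hw1 hw3, f2]
        norm_num
      rw [hz, Finset.sum_pair (hne 1 3 (by omega) (by omega)), f1, f2, f3]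
      norm_num
    rw [lap, hsum, zero_div]
  have hlap3 : lap G f (a 3) = 0 := by
    have hsubset : ({a 2, a 4} : Finset V) ⊆ G.neighborFinset (a 3) := by
      intro w hw
      rcases Finset.mem_insert.mp hw with h | h
      · rw [h, hnbr3]; exact adj23.symm
      · rw [Finset.mem_singleton.mp h, hnbr3]; exact adj34
    have hsum : (∑ w ∈ G.neighborFinset (a 3), ((f w : ℝ) - (f (a 3) : ℝ))) = 0 := by
      rw [← Finset.sum_sdiff hsubset]
      have hz : (∑ w ∈ G.neighborFinset (a 3) \ {a 2, a 4},
          ((f w : ℝ) - (f (a 3) : ℝ))) = 0 := by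
        apply Finset.sum_eq_zero
        intro w hw
        obtain ⟨hwmem, hwnot⟩ := Finset.mem_sdiff.mp hw
        have hwadj := (hnbr3 w).mp hwmem
        have hw2 : w ≠ a 2 := fun h => hwnot (by simp [h])
        have hw4 : w ≠ a 4 := fun h => hwnot (by simp [h])
        rw [fC3 w hwadj hw2 hw4, f3]
        norm_num
      rw [hz, Finset.sum_pair (hne 2 4 (by omega) (by omega)), f2, f3, f4]
      norm_num
    rw [lap, hsum, zero_div]
  -- Distance lower bounds in G
  have gna13 : ¬ G.Adj (a 1) (a 3) := fun h => tna13 ((hGadj 1 (by omega) (by omega) _).mp h)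
  have gna14 : ¬ G.Adj (a 1) (a 4) := fun h => tna14 ((hGadj 1 (by omega) (by omega) _).mp h)
  have gna24 : ¬ G.Adj (a 2) (a 4) := fun h => tna24 ((hGadj 2 (by omega) (by omega) _).mp h)
  have hd13 : 2 ≤ G.dist (a 1) (a 3) :=
    aux_two_le_dist hGconn (hne 1 3 (by omega) (by omega)) gna13
  have hd24 : 2 ≤ G.dist (a 2) (a 4) :=
    aux_two_le_dist hGconn (hne 2 4 (by omega) (by omega)) gna24
  have hd14 : 3 ≤ G.dist (a 1) (a 4) := by
    apply aux_three_le_dist hGconn (hne 1 4 (by omega) (by omega)) gna14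
    intro z h1z hz4
    have ht1 : T.Adj (a 1) z := (hGadj 1 (by omega) (by omega) _).mp h1z
    have ht4 : T.Adj (a 4) z := (hGadj 4 (by omega) (by omega) _).mp hz4.symm
    have hle1 := aux_adj_dist_le_one ht1
    have hle2 := aux_adj_dist_le_one ht4
    have htr : T.dist (a 1) (a 4) ≤ T.dist (a 1) z + T.dist z (a 4) := hconn.dist_triangle
    have hcm : T.dist z (a 4) = T.dist (a 4) z := SimpleGraph.dist_comm ..
    omega
  have hd1C3 : ∀ z, T.Adj (a 3) z → z ≠ a 2 → z ≠ a 4 → 2 ≤ G.dist (a 1) z := by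
    intro z hz hz2 hz4
    have hz1 : a 1 ≠ z := by
      intro h; rw [← h] at hz; exact tna13 hz.symm
    apply aux_two_le_dist hGconn hz1
    intro hadj1z
    have ht : T.Adj (a 1) z := (hGadj 1 (by omega) (by omega) _).mp hadj1z
    rcases aux_tree_no_square hT adj12 adj23 hz ht.symm with h | h
    · exact (hne 1 3 (by omega) (by omega)) h
    · exact hz2 h.symm
  have hdC24 : ∀ z, T.Adj (a 2) z → z ≠ a 1 → z ≠ a 3 → 2 ≤ G.dist z (a 4) := by
    intro z hz hz1 hz3
    have hz4 : z ≠ a 4 := by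
      intro h; rw [h] at hz; exact tna24 hz
    apply aux_two_le_dist hGconn hz4
    intro hadjz4
    have ht : T.Adj (a 4) z := ((hGadj 4 (by omega) (by omega) _).mp hadjz4.symm)
    rcases aux_tree_no_square hT hz.symm adj23 adj34 ht with h | h
    · exact hz3 h
    · exact (hne 2 4 (by omega) (by omega)) h
  have hone : ∀ u v : V, u ≠ v → (1 : ℤ) ≤ (G.dist u v : ℤ) := by
    intro u v h
    exact_mod_cast hGconn.pos_dist_of_ne h
  -- classification of the ball around {a 2, a 3}
  have hclass : ∀ u : V,
      u ∈ insert (a 2) (G.neighborSet (a 2)) ∪ insert (a 3) (G.neighborSet (a 3)) →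
      u = a 1 ∨ u = a 2 ∨ u = a 3 ∨ u = a 4 ∨
      (T.Adj (a 2) u ∧ u ≠ a 1 ∧ u ≠ a 3) ∨
      (T.Adj (a 3) u ∧ u ≠ a 2 ∧ u ≠ a 4) := by
    intro u hu
    rcases hu with hu | hu
    · rcases Set.mem_insert_iff.mp hu with h | h
      · exact Or.inr (Or.inl h)
      · have ht : T.Adj (a 2) u := (hGadj 2 (by omega) (by omega) _).mp h
        by_cases h1 : u = a 1
        · exact Or.inl h1
        by_cases h3 : u = a 3
        · exact Or.inr (Or.inr (Or.inl h3))
        · exact Or.inr (Or.inr (Or.inr (Or.inr (Or.inl ⟨ht, h1, h3⟩))))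
    · rcases Set.mem_insert_iff.mp hu with h | h
      · exact Or.inr (Or.inr (Or.inl h))
      · have ht : T.Adj (a 3) u := (hGadj 3 (by omega) (by omega) _).mp h
        by_cases h2 : u = a 2
        · exact Or.inr (Or.inl h2)
        by_cases h4 : u = a 4
        · exact Or.inr (Or.inr (Or.inr (Or.inl h4)))
        · exact Or.inr (Or.inr (Or.inr (Or.inr (Or.inr ⟨ht, h2, h4⟩))))
  -- the one-sided Lipschitz estimate
  have hCC : ∀ z w : V, T.Adj (a 2) z → T.Adj (a 3) w → z ≠ w := by
    intro z w h2 h3 h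
    rw [h] at h2
    exact aux_tree_no_triangle hT adj23 h3 h2.symm
  have key : ∀ u v : V,
      (u = a 1 ∨ u = a 2 ∨ u = a 3 ∨ u = a 4 ∨
        (T.Adj (a 2) u ∧ u ≠ a 1 ∧ u ≠ a 3) ∨
        (T.Adj (a 3) u ∧ u ≠ a 2 ∧ u ≠ a 4)) →
      (v = a 1 ∨ v = a 2 ∨ v = a 3 ∨ v = a 4 ∨
        (T.Adj (a 2) v ∧ v ≠ a 1 ∧ v ≠ a 3) ∨
        (T.Adj (a 3) v ∧ v ≠ a 2 ∧ v ≠ a 4)) →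
      f u - f v ≤ (G.dist u v : ℤ) := by
    have hnonneg : ∀ u v : V, (0 : ℤ) ≤ (G.dist u v : ℤ) := fun u v => Int.natCast_nonneg _
    intro u v hu hv
    -- compute f u and f v together with structural info
    have hfu : f u = -1 ∧ u = a 1 ∨ f u = 0 ∧ (u = a 2 ∨ (T.Adj (a 2) u ∧ u ≠ a 1 ∧ u ≠ a 3)) ∨
        f u = 1 ∧ (u = a 3 ∨ (T.Adj (a 3) u ∧ u ≠ a 2 ∧ u ≠ a 4)) ∨ f u = 2 ∧ u = a 4 := by
      rcases hu with h | h | h | h | ⟨h, h1, h3⟩ | ⟨h, h2, h4⟩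
      · exact Or.inl ⟨h ▸ f1, h⟩
      · exact Or.inr (Or.inl ⟨h ▸ f2, Or.inl h⟩)
      · exact Or.inr (Or.inr (Or.inl ⟨h ▸ f3, Or.inl h⟩))
      · exact Or.inr (Or.inr (Or.inr ⟨h ▸ f4, h⟩))
      · exact Or.inr (Or.inl ⟨fC2 u h h1 h3, Or.inr ⟨h, h1, h3⟩⟩)
      · exact Or.inr (Or.inr (Or.inl ⟨fC3 u h h2 h4, Or.inr ⟨h, h2, h4⟩⟩))
    have hfv : f v = -1 ∧ v = a 1 ∨ f v = 0 ∧ (v = a 2 ∨ (T.Adj (a 2) v ∧ v ≠ a 1 ∧ v ≠ a 3)) ∨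
        f v = 1 ∧ (v = a 3 ∨ (T.Adj (a 3) v ∧ v ≠ a 2 ∧ v ≠ a 4)) ∨ f v = 2 ∧ v = a 4 := by
      rcases hv with h | h | h | h | ⟨h, h1, h3⟩ | ⟨h, h2, h4⟩
      · exact Or.inl ⟨h ▸ f1, h⟩
      · exact Or.inr (Or.inl ⟨h ▸ f2, Or.inl h⟩)
      · exact Or.inr (Or.inr (Or.inl ⟨h ▸ f3, Or.inl h⟩))
      · exact Or.inr (Or.inr (Or.inr ⟨h ▸ f4, h⟩))
      · exact Or.inr (Or.inl ⟨fC2 v h h1 h3, Or.inr ⟨h, h1, h3⟩⟩)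
      · exact Or.inr (Or.inr (Or.inl ⟨fC3 v h h2 h4, Or.inr ⟨h, h2, h4⟩⟩))
    rcases hfu with ⟨hfu', hu'⟩ | ⟨hfu', hu'⟩ | ⟨hfu', hu'⟩ | ⟨hfu', hu'⟩ <;>
      rcases hfv with ⟨hfv', hv'⟩ | ⟨hfv', hv'⟩ | ⟨hfv', hv'⟩ | ⟨hfv', hv'⟩ <;>
      rw [hfu', hfv']
    -- (-1, -1)
    · have := hnonneg u v; omega
    -- (-1, 0)
    · have := hnonneg u v; omega
    -- (-1, 1)
    · have := hnonneg u v; omega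
    -- (-1, 2)
    · have := hnonneg u v; omega
    -- (0, -1) : gap 1
    · have huv : u ≠ v := by
        rcases hu' with h | ⟨_, h1, _⟩
        · rw [h, hv']; exact (hne 1 2 (by omega) (by omega)).symm
        · rw [hv']; exact h1
      have := hone u v huv; omega
    -- (0, 0)
    · have := hnonneg u v; omega
    -- (0, 1)
    · have := hnonneg u v; omega
    -- (0, 2)
    · have := hnonneg u v; omega
    -- (1, -1) : gap 2
    · rw [hv']
      rcases hu' with h | ⟨h, h2, h4⟩
      · rw [h]
        have : 2 ≤ G.dist (a 3) (a 1) := by rwa [SimpleGraph.dist_comm] at hd13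
        omega
      · have := hd1C3 u h h2 h4
        have h' : 2 ≤ G.dist u (a 1) := by rwa [SimpleGraph.dist_comm] at this
        omega
    -- (1, 0) : gap 1
    · have huv : u ≠ v := by
        rcases hu' with h | ⟨h, h2, _⟩ <;> rcases hv' with h' | ⟨h', h1, h3⟩
        · rw [h, h']; exact (hne 2 3 (by omega) (by omega)).symm
        · rw [h]; exact fun heq => h3 heq.symm
        · rw [h']; exact h2
        · exact (hCC v u h' h).symm
      have := hone u v huv; omega
    -- (1, 1)
    · have := hnonneg u v; omega
    -- (1, 2)
    · have := hnonneg u v; omega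
    -- (2, -1) : gap 3
    · rw [hu', hv']
      have : 3 ≤ G.dist (a 4) (a 1) := by rwa [SimpleGraph.dist_comm] at hd14
      omega
    -- (2, 0) : gap 2
    · rw [hu']
      rcases hv' with h | ⟨h, h1, h3⟩
      · rw [h]
        have : 2 ≤ G.dist (a 4) (a 2) := by rwa [SimpleGraph.dist_comm] at hd24
        omega
      · have := hdC24 v h h1 h3
        have h' : 2 ≤ G.dist (a 4) v := by rwa [SimpleGraph.dist_comm] at this
        omega
    -- (2, 1) : gap 1
    · have huv : u ≠ v := by
        rw [hu']
        rcases hv' with h | ⟨_, _, h4⟩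
        · rw [h]; exact (hne 3 4 (by omega) (by omega)).symm
        · exact fun heq => h4 heq.symm
      have := hone u v huv; omega
    -- (2, 2)
    · have := hnonneg u v; omega
  -- 0 belongs to the defining set of kappaLLY G (a 2) (a 3)
  have hmem : (0 : ℝ) ∈ { r : ℝ | ∃ g : V → ℤ,
      (∀ u ∈ insert (a 2) (G.neighborSet (a 2)) ∪ insert (a 3) (G.neighborSet (a 3)),
        ∀ v ∈ insert (a 2) (G.neighborSet (a 2)) ∪ insert (a 3) (G.neighborSet (a 3)),
          |g u - g v| ≤ (G.dist u v : ℤ)) ∧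
      g (a 3) - g (a 2) = 1 ∧ r = lap G g (a 2) - lap G g (a 3) } := by
    refine ⟨f, ?_, ?_, ?_⟩
    · intro u hu v hv
      rw [abs_sub_le_iff]
      constructor
      · exact key u v (hclass u hu) (hclass v hv)
      · have := key v u (hclass v hv) (hclass u hu)
        rwa [SimpleGraph.dist_comm] at this
    · rw [f3, f2]; norm_num
    · rw [hlap2, hlap3]; norm_num
  have hkle : kappaLLY G (a 2) (a 3) ≤ 0 := aux_sInf_le_zero hmem
  have hadjG : G.Adj (a 2) (a 3) := hTG adj23
  have := hpos (a 2) (a 3) hadjG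
  linarith
end

section
/- If G is a generalized Halin graph H(T,C) with maximum degree vertex x of degree D(T) ≥ 8, exactly D(T) leaves, and some cycle vertex p with d_T(x,p) = 2 in a component whose neighbor of x is y, then κ_LLY(x,y) ≤ 4/D(T) − 1/2 ≤ 0. -/
open SimpleGraph

attribute [local instance] Classical.propDecidable

variable {V : Type*}

lemma halin_adj (T : SimpleGraph V) {ℓ : ℕ} (σ : ZMod ℓ → V) (a b : V) :
    (halinGraph T σ).Adj a b ↔ T.Adj a b ∨ (a ≠ b ∧
      ((∃ j : ZMod ℓ, a = σ j ∧ b = σ (j + 1)) ∨ (∃ j : ZMod ℓ, b = σ j ∧ a = σ (j + 1)))) := by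
  simp [halinGraph, fromRel_adj]

lemma aux_unique_nbr (T : SimpleGraph V) (hT : T.IsTree) {x y w : V}
    (hy : T.Adj x y) (hw : T.Adj x w) (q : T.Walk y w) (hq : x ∉ q.support) : y = w := by
  classical
  let P1 : T.Path x w := ⟨Walk.cons hw Walk.nil, by simp [hw.ne]⟩
  let P2 : T.Path x w := ⟨Walk.cons hy q.toPath.1,
    q.toPath.2.cons (fun hxs => hq (Walk.support_toPath_subset q hxs))⟩
  have hEq : P1 = P2 := isAcyclic_iff_path_unique.mp hT.2 P1 P2
  have hlen : (P1 : T.Walk x w).length = (P2 : T.Walk x w).length := by rw [hEq]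
  simp only [P1, P2, Walk.length_cons, Walk.length_nil] at hlen
  exact Walk.eq_of_length_eq_zero (p := q.toPath.1) (by omega)

lemma abs_lap_le' (G : SimpleGraph V) [∀ v : V, Fintype (G.neighborSet v)] (g : V → ℤ) (v : V)
    (h : ∀ w ∈ G.neighborFinset v, |(g w : ℝ) - (g v : ℝ)| ≤ 1) :
    |lap G g v| ≤ 1 := by
  unfold lap
  rcases Nat.eq_zero_or_pos (G.degree v) with h0 | h0
  · rw [h0]; simp
  · rw [abs_div, abs_of_nonneg (by positivity : (0:ℝ) ≤ (G.degree v : ℝ)),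
      div_le_one (by exact_mod_cast h0)]
    calc |∑ w ∈ G.neighborFinset v, ((g w : ℝ) - (g v : ℝ))|
        ≤ ∑ w ∈ G.neighborFinset v, |(g w : ℝ) - (g v : ℝ)| := Finset.abs_sum_le_sum_abs _ _
      _ ≤ ∑ _w ∈ G.neighborFinset v, (1:ℝ) := Finset.sum_le_sum h
      _ = (G.degree v : ℝ) := by simp [SimpleGraph.card_neighborFinset_eq_degree]

theorem stmt19 {V : Type*} [Fintype V] (T : SimpleGraph V) (hT : T.IsTree)
    (ℓ : ℕ) (hℓ : 3 ≤ ℓ) (σ : ZMod ℓ → V) (hinj : Function.Injective σ)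
    (hleaf : ∀ v : V, v ∈ Set.range σ ↔ T.degree v = 1)
    (x : V) (hmax : ∀ v : V, T.degree v ≤ T.degree x) (hx : 8 ≤ T.degree x)
    (hleaves : {v : V | T.degree v = 1}.ncard = T.degree x)
    (i : ZMod ℓ) (hp : T.dist x (σ i) = 2)
    (y : V) (hy : T.Adj x y) (hyp : SameComp T x y (σ i)) :
    kappaLLY (halinGraph T σ) x y ≤ 4 / (T.degree x : ℝ) - 1 / 2 ∧
      4 / (T.degree x : ℝ) - 1 / 2 ≤ 0 := by
  classical
  set D := T.degree x with hD
  set p := σ i with hpdef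
  set G := halinGraph T σ with hG
  have hDpos : (0:ℝ) < (D:ℝ) := by
    have : (8:ℝ) ≤ (D:ℝ) := by exact_mod_cast hx
    linarith
  refine ⟨?_, ?_⟩
  swap
  · rw [sub_nonpos, div_le_div_iff₀ hDpos (by norm_num)]
    have : (8:ℝ) ≤ (D:ℝ) := by exact_mod_cast hx
    linarith
  -- basic structure
  have hxR : x ∉ Set.range σ := fun h => by have := (hleaf x).mp h; omega
  have hpR : p ∈ Set.range σ := ⟨i, rfl⟩
  have hdegp : T.degree p = 1 := (hleaf p).mp hpR
  have hxp : x ≠ p := fun h => by rw [h, SimpleGraph.dist_self] at hp; omega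
  -- midpoint w with Adj x w, Adj w p
  obtain ⟨wk, hwk⟩ := hT.1.exists_walk_length_eq_dist x p
  rw [hp] at hwk
  obtain ⟨w, hxw, hwp⟩ : ∃ w : V, T.Adj x w ∧ T.Adj w p := by
    refine ⟨wk.getVert 1, ?_, ?_⟩
    · have := wk.adj_getVert_succ (i := 0) (by omega)
      simpa using this
    · have := wk.adj_getVert_succ (i := 1) (by omega)
      have h2 : wk.getVert 2 = p := by
        rw [← hwk]; exact wk.getVert_length
      rwa [h2] at this
  -- y = w
  obtain ⟨wyp, hwyp⟩ := hyp
  have hyw : y = w := by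
    refine aux_unique_nbr T hT hy hxw (wyp.concat hwp.symm) ?_
    rw [Walk.support_concat]
    simp only [List.concat_eq_append, List.mem_append, List.mem_singleton]
    rintro (h | h)
    · exact hwyp h
    · exact hxw.ne h
  have hyP : T.Adj y p := hyw ▸ hwp
  have hyx : y ≠ x := hy.ne'
  have hynep : y ≠ p := hyP.ne
  -- degree of y = 2 by counting
  have hdegy : T.degree y = 2 := by
    have hdegpos : ∀ v : V, v ≠ x → 1 ≤ T.degree v := by
      intro v hv
      obtain ⟨wk2⟩ := hT.1.preconnected v x
      cases wk2 with
      | nil => exact absurd rfl hv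
      | cons h _ => exact (T.degree_pos_iff_exists_adj v).mpr ⟨_, h⟩
    set U' := Finset.univ.erase x with hU'
    set L := Finset.univ.filter (fun v => T.degree v = 1) with hL
    have hLcard : L.card = D := by
      rw [← hleaves, Set.ncard_eq_toFinset_card']
      simp [hL, Set.toFinset_setOf]
    have hxL : x ∉ L := by simp only [hL, Finset.mem_filter]; omega
    have hLU : L ⊆ U' := fun v hv =>
      Finset.mem_erase.mpr ⟨fun h => hxL (h ▸ hv), Finset.mem_univ v⟩
    have hcardU' : U'.card = Fintype.card V - 1 := by
      simp [hU', Finset.card_erase_of_mem, Finset.card_univ]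
    have hDle : D ≤ Fintype.card V - 1 := hLcard ▸ hcardU' ▸ Finset.card_le_card hLU
    have hedges : T.edgeFinset.card + 1 = Fintype.card V := hT.card_edgeFinset
    have hsum : ∑ v, T.degree v = 2 * T.edgeFinset.card := T.sum_degrees_eq_twice_card_edges
    have hsplit : ∑ v ∈ U', T.degree v + D = ∑ v, T.degree v := by
      rw [hD, hU']
      exact Finset.sum_erase_add _ _ (Finset.mem_univ x)
    have hfilter : U'.filter (fun v => T.degree v = 1) = L := by
      ext v
      simp only [hU', hL, Finset.mem_filter, Finset.mem_erase, Finset.mem_univ, true_and,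
        and_true]
      constructor
      · rintro ⟨_, h⟩; exact h
      · intro h; refine ⟨?_, h⟩; rintro rfl; omega
    have hcards := Finset.card_filter_add_card_filter_not
      (s := U') (p := fun v => T.degree v = 1)
    rw [hfilter, hLcard] at hcards
    have hsumlow : ∑ v ∈ U', (if T.degree v = 1 then 1 else 2) =
        D * 1 + (U'.filter (fun v => ¬ T.degree v = 1)).card * 2 := by
      rw [Finset.sum_ite, hfilter, Finset.sum_const, Finset.sum_const, hLcard]
      simp [mul_comm]
    have hlow_le : ∀ v ∈ U', (if T.degree v = 1 then 1 else 2) ≤ T.degree v := by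
      intro v hv
      have h1 := hdegpos v (Finset.mem_erase.mp hv).1
      split <;> omega
    have hsum_eq : ∑ v ∈ U', (if T.degree v = 1 then 1 else 2) = ∑ v ∈ U', T.degree v := by
      omega
    have hpt := (Finset.sum_eq_sum_iff_of_le hlow_le).mp hsum_eq y
      (Finset.mem_erase.mpr ⟨hyx, Finset.mem_univ y⟩)
    have hdegy2 : 2 ≤ T.degree y := by
      have hsub : ({x, p} : Finset V) ⊆ T.neighborFinset y := by
        intro v hv
        simp only [Finset.mem_insert, Finset.mem_singleton] at hv
        rcases hv with rfl | rfl
        · simpa using hy.symm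
        · simpa using hyP
      calc 2 = ({x, p} : Finset V).card := (Finset.card_pair hxp).symm
        _ ≤ (T.neighborFinset y).card := Finset.card_le_card hsub
        _ = T.degree y := T.card_neighborFinset_eq_degree y
    by_cases hdy : T.degree y = 1 <;> simp [hdy] at hpt <;> omega
  have hyR : y ∉ Set.range σ := fun h => by have := (hleaf y).mp h; omega
  have hNy : T.neighborFinset y = {x, p} := by
    refine (Finset.eq_of_subset_of_card_le ?_ ?_).symm
    · intro v hv
      simp only [Finset.mem_insert, Finset.mem_singleton] at hv
      rcases hv with rfl | rfl
      · simpa using hy.symm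
      · simpa using hyP
    · rw [T.card_neighborFinset_eq_degree y, hdegy, Finset.card_pair hxp]
  have hNp : T.neighborFinset p = {y} := by
    refine (Finset.eq_of_subset_of_card_le ?_ ?_).symm
    · intro v hv
      simp only [Finset.mem_singleton] at hv
      subst hv; simpa using hyP.symm
    · rw [T.card_neighborFinset_eq_degree p, hdegp, Finset.card_singleton]
  haveI : NeZero ℓ := ⟨by omega⟩
  haveI : Fact (1 < ℓ) := ⟨by omega⟩
  have hne1 : (i + 1 : ZMod ℓ) ≠ i := fun h => one_ne_zero (add_eq_left.mp h)
  have hne2 : (i - 1 : ZMod ℓ) ≠ i := fun h =>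
    one_ne_zero (add_eq_left.mp (sub_eq_iff_eq_add.mp h).symm)
  have hs2p : σ (i + 1) ≠ p := fun h => hne1 (hinj (h.trans hpdef))
  have hs1p : σ (i - 1) ≠ p := fun h => hne2 (hinj (h.trans hpdef))
  have hs2y : σ (i + 1) ≠ y := fun h => hyR (h ▸ ⟨i + 1, rfl⟩)
  have hs1y : σ (i - 1) ≠ y := fun h => hyR (h ▸ ⟨i - 1, rfl⟩)
  -- G-neighborhoods
  have hGx : G.neighborFinset x = T.neighborFinset x := by
    ext v
    simp only [SimpleGraph.mem_neighborFinset]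
    rw [hG, halin_adj]
    constructor
    · rintro (h | ⟨-, ⟨j, hj1, -⟩ | ⟨j, -, hj2⟩⟩)
      · exact h
      · exact absurd ⟨j, hj1.symm⟩ hxR
      · exact absurd ⟨j + 1, hj2.symm⟩ hxR
    · exact Or.inl
  have hGdx : G.degree x = D := by
    rw [← G.card_neighborFinset_eq_degree x, hGx, T.card_neighborFinset_eq_degree x]
  have hGy : G.neighborFinset y = {x, p} := by
    ext v
    simp only [SimpleGraph.mem_neighborFinset]
    rw [hG, halin_adj]
    constructor
    · rintro (h | ⟨-, ⟨j, hj1, -⟩ | ⟨j, -, hj2⟩⟩)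
      · have : v ∈ T.neighborFinset y := by simpa using h
        rw [hNy] at this
        simpa using this
      · exact absurd ⟨j, hj1.symm⟩ hyR
      · exact absurd ⟨j + 1, hj2.symm⟩ hyR
    · intro hv
      simp only [Finset.mem_insert, Finset.mem_singleton] at hv
      rcases hv with rfl | rfl
      · exact Or.inl hy.symm
      · exact Or.inl hyP
  have hGdy : G.degree y = 2 := by
    rw [← G.card_neighborFinset_eq_degree y, hGy, Finset.card_pair hxp]
  have hAdjP : ∀ v : V, G.Adj p v → v = y ∨ v = σ (i - 1) ∨ v = σ (i + 1) := by
    intro v hv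
    rw [hG, halin_adj] at hv
    rcases hv with h | ⟨-, ⟨j, hj1, hj2⟩ | ⟨j, hj1, hj2⟩⟩
    · left
      have : v ∈ T.neighborFinset p := by simpa using h
      rw [hNp] at this
      simpa using this
    · right; right
      have : j = i := hinj (hj1.symm.trans hpdef)
      rw [hj2, this]
    · right; left
      have hji : j + 1 = i := hinj (hj2.symm.trans hpdef)
      have : j = i - 1 := by rw [← hji]; ring
      rw [hj1, this]
  -- the test function
  set f : V → ℤ := fun z =>
    if z = y ∨ z = p then 1 else if z = x ∨ z = σ (i - 1) ∨ z = σ (i + 1) then 0 else -1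
    with hf
  have fy : f y = 1 := by simp [hf]
  have fp : f p = 1 := by simp [hf]
  have fx : f x = 0 := by simp [hf, hy.ne, hxp]
  have fs1 : f (σ (i - 1)) = 0 := by simp [hf, hs1y, hs1p]
  have fs2 : f (σ (i + 1)) = 0 := by simp [hf, hs2y, hs2p]
  -- Lipschitz
  have hGconn : G.Connected := SimpleGraph.Connected.mono le_sup_left hT.1
  have hval : ∀ z : V, -1 ≤ f z ∧ f z ≤ 1 := by
    intro z
    simp only [hf]
    split_ifs <;> omega
  have hone : ∀ u v : V, G.Adj u v → f u = 1 → 0 ≤ f v := by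
    intro u v huv h1
    have hu : u = y ∨ u = p := by
      by_contra hc
      simp only [hf, if_neg hc] at h1
      split_ifs at h1 <;> omega
    rcases hu with rfl | rfl
    · have : v ∈ G.neighborFinset u := by simpa using huv
      rw [hGy] at this
      simp only [Finset.mem_insert, Finset.mem_singleton] at this
      rcases this with rfl | rfl
      · rw [fx]
      · rw [fp]; omega
    · rcases hAdjP v huv with rfl | rfl | rfl
      · rw [fy]; omega
      · rw [fs1]
      · rw [fs2]
  have hstep : ∀ u v : V, G.Adj u v → |f u - f v| ≤ 1 := by
    intro u v h
    have h1 := hval u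
    have h2 := hval v
    by_cases hu : f u = 1
    · have := hone u v h hu
      rw [abs_le]; omega
    by_cases hv : f v = 1
    · have := hone v u h.symm hv
      rw [abs_le]; omega
    rw [abs_le]; omega
  have hLip : ∀ u v : V, |f u - f v| ≤ ((G.dist u v : ℕ) : ℤ) := by
    intro u v
    by_cases huv : u = v
    · subst huv; simp
    by_cases hadj : G.Adj u v
    · rw [SimpleGraph.dist_eq_one_iff_adj.mpr hadj]
      exact_mod_cast hstep u v hadj
    · have h0 : 0 < G.dist u v :=
        (hGconn.preconnected u v).pos_dist_of_ne huv
      have h1 : G.dist u v ≠ 1 := fun h => hadj (SimpleGraph.dist_eq_one_iff_adj.mp h)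
      have h2 : 2 ≤ G.dist u v := by omega
      have h2' : (2 : ℤ) ≤ ((G.dist u v : ℕ) : ℤ) := by exact_mod_cast h2
      have ha := hval u
      have hb := hval v
      rw [abs_le]
      omega
  -- Laplacian at y
  have hlapy : lap G f y = -(1 / 2) := by
    unfold lap
    rw [hGy, hGdy, Finset.sum_insert (by simp [hxp]), Finset.sum_singleton, fx, fy, fp]
    norm_num
  -- Laplacian at x
  have hlapx : lap G f x ≤ ((4 : ℝ) - D) / D := by
    unfold lap
    rw [hGx, hGdx]
    have hyA : y ∈ T.neighborFinset x := by simpa using hy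
    have hsumZ : ∑ w ∈ T.neighborFinset x, f w ≤ 4 - (D : ℤ) := by
      rw [← Finset.add_sum_erase _ f hyA, fy]
      set A' := (T.neighborFinset x).erase y with hA'
      have hcardA' : A'.card = D - 1 := by
        rw [hA', Finset.card_erase_of_mem hyA, T.card_neighborFinset_eq_degree x]
      have hb : ∀ w ∈ A', f w ≤ (if w = σ (i - 1) ∨ w = σ (i + 1) then (0 : ℤ) else -1) := by
        intro w hw
        obtain ⟨hwy, hwA⟩ := Finset.mem_erase.mp hw
        have hadj : T.Adj x w := by simpa using hwA
        have hwx : w ≠ x := hadj.ne'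
        have hwp : w ≠ p := by
          intro h
          rw [h] at hadj
          have h1 := SimpleGraph.dist_eq_one_iff_adj.mpr hadj
          omega
        have : f w = if w = σ (i - 1) ∨ w = σ (i + 1) then (0 : ℤ) else -1 := by
          simp [hf, hwy, hwp, hwx]
        rw [this]
      have h1 := Finset.sum_le_sum hb
      have h2 : ∑ w ∈ A', (if w = σ (i - 1) ∨ w = σ (i + 1) then (0 : ℤ) else -1)
          = -(((A'.filter (fun w => ¬(w = σ (i - 1) ∨ w = σ (i + 1)))).card : ℤ)) := by
        rw [Finset.sum_ite, Finset.sum_const, Finset.sum_const]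
        simp
      have h3 : (A'.filter (fun w => (w = σ (i - 1) ∨ w = σ (i + 1)))).card ≤ 2 := by
        have hsub : A'.filter (fun w => (w = σ (i - 1) ∨ w = σ (i + 1)))
            ⊆ ({σ (i - 1), σ (i + 1)} : Finset V) := by
          intro w hw
          simpa using (Finset.mem_filter.mp hw).2
        calc (A'.filter (fun w => (w = σ (i - 1) ∨ w = σ (i + 1)))).card
            ≤ ({σ (i - 1), σ (i + 1)} : Finset V).card := Finset.card_le_card hsub
          _ ≤ 2 := (Finset.card_insert_le _ _).trans (by simp)
      have h4 := Finset.card_filter_add_card_filter_not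
        (s := A') (p := fun w => (w = σ (i - 1) ∨ w = σ (i + 1)))
      omega
    have hcast : ∑ w ∈ T.neighborFinset x, ((f w : ℝ) - (f x : ℝ))
        = ((∑ w ∈ T.neighborFinset x, f w : ℤ) : ℝ) := by
      rw [fx]
      push_cast
      simp
    rw [hcast]
    have hZ : ((∑ w ∈ T.neighborFinset x, f w : ℤ) : ℝ) ≤ (4 : ℝ) - D := by
      exact_mod_cast hsumZ
    gcongr
  -- conclusion
  have hle : lap G f x - lap G f y ≤ 4 / (D : ℝ) - 1 / 2 := by
    rw [hlapy]
    have hdiv : ((4 : ℝ) - D) / D = 4 / (D : ℝ) - 1 := by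
      field_simp
    linarith
  unfold kappaLLY
  refine le_trans (csInf_le ?_ ?_) hle
  · refine ⟨-2, ?_⟩
    rintro r ⟨g, hg, -, rfl⟩
    have hnb : ∀ z : V, ∀ w ∈ G.neighborFinset z,
        (z = x ∨ z = y) → |(g w : ℝ) - (g z : ℝ)| ≤ 1 := by
      intro z w hw hz
      have hadj : G.Adj z w := by simpa using hw
      have hmemz : z ∈ insert x (G.neighborSet x) ∪ insert y (G.neighborSet y) := by
        rcases hz with rfl | rfl
        · exact Set.mem_union_left _ (Set.mem_insert _ _)
        · exact Set.mem_union_right _ (Set.mem_insert _ _)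
      have hmemw : w ∈ insert x (G.neighborSet x) ∪ insert y (G.neighborSet y) := by
        rcases hz with rfl | rfl
        · exact Set.mem_union_left _ (Set.mem_insert_of_mem _ hadj)
        · exact Set.mem_union_right _ (Set.mem_insert_of_mem _ hadj)
      have hdist : G.dist w z = 1 := SimpleGraph.dist_eq_one_iff_adj.mpr hadj.symm
      have := hg w hmemw z hmemz
      rw [hdist] at this
      exact_mod_cast this
    have h1 := abs_lap_le' G g x (fun w hw => hnb x w hw (Or.inl rfl))
    have h2 := abs_lap_le' G g y (fun w hw => hnb y w hw (Or.inr rfl))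
    rw [abs_le] at h1 h2
    linarith [h1.1, h2.2]
  · exact ⟨f, fun u _ v _ => hLip u v, by rw [fy, fx]; ring, rfl⟩
end
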